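/- arXiv:2405.11477 — 4 statements merged into one kernel-verified Lean document; each statement's English description precedes it below -/
import Mathlib

section
/- Lemma (C.6, first assertion). For each m ∈ {1,…,M} and every measurable function q : ℝ^{p − #𝒳(m)} → ℝ with E|q(X_{−𝒳(m)})| < ∞, it holds almost surely that | E q(X_{−𝒳(m)}) − E( q(X_{−𝒳(m)}) | X_{𝒳(m)} ) | ≤ δ₀ E|q(X_{−𝒳(m)})| / ( min_{1≤m'≤M, l∈𝒳(m'), a∈{0,1}} P(X_l = a) ), provided the minimum in the denominator is strictly positive. -/
/-!
Conditioning on `X_{𝒳(m)}` is conditioning on a finite partition, so the conditional expectation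
of `q(X_{-𝒳(m)})` is its average over the atom `{X_{𝒳(m)} = X_{𝒳(m)}(ω)}`. By the one-hot
constraint each atom is, up to a null set, an event `{X_i = a}` with `i ∈ 𝒳(m)` (or the whole
space when `𝒳(m) = ∅`). Since `q(X_{-𝒳(m)})` is `X_{-𝒳(m)}`-measurable,
`E[q 1{X_i = 1}] = E[q P(X_i = 1 | X_{-𝒳(m)})]`, which is within `δ₀ E|q|` of `E q P(X_i = 1)`;
the same holds for `X_i = 0` by complementation, and dividing by `P(X_i = a) ≥ pm1` gives the bound.
-/

open MeasureTheory ProbabilityTheory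

noncomputable section

namespace CT9

/-- The sub-σ-algebra of `Ω` generated by the coordinates of `X` lying in `S`. -/
def coordSigma {Ω : Type*} [MeasurableSpace Ω] {p : ℕ} (X : Ω → Fin p → Bool)
    (S : Finset (Fin p)) : MeasurableSpace Ω :=
  MeasurableSpace.comap (fun ω => fun i : {x // x ∈ S} => X ω i.1) inferInstance

/-- `𝒳(J)`, the union of the feature groups indexed by `J`. -/
def gset {p M : ℕ} (G : Fin M → Finset (Fin p)) (J : Finset (Fin M)) : Finset (Fin p) :=
  J.biUnion G

/-- `{1,…,p} \ 𝒳(J)` as a finset. -/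
def gsetCompl {p M : ℕ} (G : Fin M → Finset (Fin p)) (J : Finset (Fin M)) :
    Finset (Fin p) :=
  (J.biUnion G)ᶜ

/-- The conditional probability `P(X_i = 1 | X_{-𝒳(m)})` as a random variable. -/
def condProbOne {Ω : Type*} [MeasurableSpace Ω] {p M : ℕ} (μ : Measure Ω)
    (X : Ω → Fin p → Bool) (G : Fin M → Finset (Fin p)) (m : Fin M) (i : Fin p) : Ω → ℝ :=
  μ[(fun ω => if X ω i then (1 : ℝ) else 0) | coordSigma X (gsetCompl G {m})]

section

variable {Ω : Type*} {mΩ : MeasurableSpace Ω} {μ : Measure Ω}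

theorem condExp_comap_ae_eq_average {β : Type*} [MeasurableSpace β] [Finite β]
    [DiscreteMeasurableSpace β] [IsFiniteMeasure μ] {T : Ω → β} (hT : Measurable T)
    {f : Ω → ℝ} (hf : Integrable f μ) :
    μ[f | MeasurableSpace.comap T inferInstance] =ᵐ[μ]
      fun ω => (∫ x in T ⁻¹' {T ω}, f x ∂μ) / μ.real (T ⁻¹' {T ω}) := by
  set h : β → ℝ := fun v => (∫ x in T ⁻¹' {v}, f x ∂μ) / μ.real (T ⁻¹' {v})
  have hint : Integrable (fun x => h (T x)) μ := (Integrable.of_finite (f := h)).comp_measurable hT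
  have hdecomp : ∀ g : Ω → ℝ, Integrable g μ → ∀ B : Set β,
      ∫ x in T ⁻¹' B, g x ∂μ = ∑ v ∈ B.toFinite.toFinset, ∫ x in T ⁻¹' {v}, g x ∂μ := by
    intro g hg B
    rw [← integral_biUnion_finset _ (fun v _ => hT (measurableSet_singleton v))
      (fun v _ w _ hvw => Set.disjoint_singleton.mpr hvw |>.preimage T)
      fun v _ => hg.integrableOn]
    congr 2
    ext x
    simp
  have hatom : ∀ v, ∫ x in T ⁻¹' {v}, h (T x) ∂μ = ∫ x in T ⁻¹' {v}, f x ∂μ := by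
    intro v
    rw [setIntegral_congr_fun (hT (measurableSet_singleton v)) fun x hx => by rw [hx],
      setIntegral_const, smul_eq_mul]
    by_cases h0 : μ (T ⁻¹' {v}) = 0
    · simp [Measure.real, h0, Measure.restrict_eq_zero.mpr h0]
    · have hne : μ.real (T ⁻¹' {v}) ≠ 0 := ENNReal.toReal_ne_zero.mpr ⟨h0, measure_ne_top μ _⟩
      simp only [h]
      field_simp
  refine (ae_eq_condExp_of_forall_setIntegral_eq hT.comap_le hf
    (fun s _ _ => hint.integrableOn) ?_ ?_).symm
  · rintro _ ⟨B, -, rfl⟩ -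
    rw [hdecomp _ hint, hdecomp _ hf]
    exact Finset.sum_congr rfl fun v _ => hatom v
  · exact ((Measurable.of_discrete (f := h)).comp (comap_measurable T)).aestronglyMeasurable

theorem measurable_restrict_coords {p : ℕ} {X : Ω → Fin p → Bool} (hX : Measurable X)
    (S : Finset (Fin p)) : Measurable fun ω (i : {x // x ∈ S}) => X ω i.1 :=
  measurable_pi_lambda _ fun i => (measurable_pi_apply i.1).comp hX

def coordAtom {ι : Type*} (X : Ω → ι → Bool) (S : Finset ι) (ω : Ω) : Set Ω :=
  {ω' | ∀ j ∈ S, X ω' j = X ω j}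

theorem condExp_coordSigma_ae_eq_average [IsFiniteMeasure μ] {p : ℕ} {X : Ω → Fin p → Bool}
    (hX : Measurable X) {f : Ω → ℝ} (hf : Integrable f μ) (S : Finset (Fin p)) :
    μ[f | coordSigma X S] =ᵐ[μ]
      fun ω => (∫ x in coordAtom X S ω, f x ∂μ) / μ.real (coordAtom X S ω) := by
  have hatom : ∀ ω, (fun ω (i : {x // x ∈ S}) => X ω i.1) ⁻¹' {fun i => X ω i.1} =
      coordAtom X S ω := by
    intro ω
    ext ω'
    simp [coordAtom, funext_iff]
  have h := condExp_comap_ae_eq_average (μ := μ) (measurable_restrict_coords hX S) hf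
  simp only [hatom] at h
  exact h

theorem forall_mem_eq_iff_of_card_filter_eq_one {ι : Type*} {S : Finset ι} {x y : ι → Bool}
    (hx : (S.filter fun j => x j = true).card = 1) (hy : (S.filter fun j => y j = true).card = 1)
    {i : ι} (hi : i ∈ S) (hxi : x i = true) :
    (∀ j ∈ S, y j = x j) ↔ y i = true := by
  have hot : ∀ z : ι → Bool, (S.filter fun j => z j = true).card = 1 → z i = true →
      ∀ j ∈ S, (z j = true ↔ j = i) := by
    intro z hz hzi j hj
    obtain ⟨a, ha⟩ := Finset.card_eq_one.mp hz
    have hmem : ∀ k ∈ S, (z k = true ↔ k = a) := fun k hk => by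
      simpa [hk] using Finset.ext_iff.mp ha k
    rw [hmem j hj, (hmem i hi).mp hzi]
  refine ⟨fun h => h i hi ▸ hxi, fun hyi j hj => ?_⟩
  exact Bool.eq_iff_iff.mpr ((hot y hy hyi j hj).trans (hot x hx hxi j hj).symm)

theorem eq_empty_or_exists_coordAtom_ae_eq {ι : Type*} {X : Ω → ι → Bool} {S : Finset ι}
    (honehot : ∀ᵐ ω ∂μ, 1 < S.card → (S.filter fun j => X ω j = true).card = 1) {ω : Ω}
    (hω : 1 < S.card → (S.filter fun j => X ω j = true).card = 1) :
    S = ∅ ∨ ∃ i ∈ S, ∃ a : Bool, coordAtom X S ω =ᵐ[μ] {ω' | X ω' i = a} := by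
  rcases Nat.lt_or_ge 1 S.card with hcard | hcard
  · obtain ⟨i, hi⟩ := Finset.card_eq_one.mp (hω hcard)
    obtain ⟨hiS, hXi⟩ := Finset.mem_filter.mp (hi ▸ Finset.mem_singleton_self i)
    refine .inr ⟨i, hiS, true, Filter.eventuallyEq_set.mpr ?_⟩
    filter_upwards [honehot] with ω' hω'
    exact forall_mem_eq_iff_of_card_filter_eq_one (hω hcard) (hω' hcard) hiS hXi
  · rcases S.eq_empty_or_nonempty with hS | ⟨i, hi⟩
    · exact .inl hS
    refine .inr ⟨i, hi, X ω i, Filter.EventuallyEq.of_eq ?_⟩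
    ext ω'
    exact ⟨fun h => h i hi, fun h j hj => Finset.card_le_one.mp hcard j hj i hi ▸ h⟩

theorem abs_integral_mul_sub_le_of_abs_condExp_sub_le {m : MeasurableSpace Ω}
    [IsFiniteMeasure μ] (hm : m ≤ mΩ) {q g : Ω → ℝ} (hq_sm : StronglyMeasurable[m] q)
    (hq : Integrable q μ) (hg : Integrable g μ) (hqg : Integrable (q * g) μ) {c δ : ℝ}
    (hδ : ∀ᵐ ω ∂μ, |μ[g | m] ω - c| ≤ δ) :
    |∫ ω, q ω * g ω ∂μ - (∫ ω, q ω ∂μ) * c| ≤ δ * ∫ ω, |q ω| ∂μ := by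
  have hpull : ∫ ω, q ω * μ[g | m] ω ∂μ = ∫ ω, q ω * g ω ∂μ :=
    (integral_congr_ae (condExp_mul_of_stronglyMeasurable_left hq_sm hqg hg)).symm.trans
      (integral_condExp hm)
  have hbdd : ∀ᵐ ω ∂μ, ‖μ[g | m] ω‖ ≤ |c| + δ := hδ.mono fun ω h => by
    rw [Real.norm_eq_abs]
    linarith [abs_sub_abs_le_abs_sub (μ[g | m] ω) c]
  have hint : Integrable (fun ω => q ω * μ[g | m] ω) μ :=
    hq.mul_bdd integrable_condExp.aestronglyMeasurable hbdd
  calc |∫ ω, q ω * g ω ∂μ - (∫ ω, q ω ∂μ) * c|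
      = |∫ ω, q ω * (μ[g | m] ω - c) ∂μ| := by
        simp_rw [mul_sub]
        rw [integral_sub hint (hq.mul_const c), integral_mul_const, hpull]
    _ ≤ ∫ ω, |q ω * (μ[g | m] ω - c)| ∂μ := abs_integral_le_integral_abs
    _ ≤ ∫ ω, |q ω| * δ ∂μ := by
        refine integral_mono_ae (hint.sub (hq.mul_const c) |>.congr ?_).abs
          (hq.abs.mul_const δ) ?_
        · exact .of_forall fun ω => (mul_sub _ _ _).symm
        · filter_upwards [hδ] with ω h
          rw [abs_mul]
          exact mul_le_mul_of_nonneg_left h (abs_nonneg _)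
    _ = δ * ∫ ω, |q ω| ∂μ := by rw [integral_mul_const, mul_comm]

theorem abs_setIntegral_sub_le_of_abs_condExp_indicator_sub_le {m : MeasurableSpace Ω}
    [IsFiniteMeasure μ] (hm : m ≤ mΩ) {A : Set Ω} (hA : MeasurableSet[mΩ] A) {q : Ω → ℝ}
    (hq_sm : StronglyMeasurable[m] q) (hq : Integrable q μ) {δ : ℝ}
    (hδ : ∀ᵐ ω ∂μ, |μ[A.indicator 1 | m] ω - μ.real A| ≤ δ) :
    |∫ ω in A, q ω ∂μ - (∫ ω, q ω ∂μ) * μ.real A| ≤ δ * ∫ ω, |q ω| ∂μ := by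
  have hmul : q * A.indicator 1 = A.indicator q := by
    ext ω
    by_cases hω : ω ∈ A <;> simp [hω]
  have h := abs_integral_mul_sub_le_of_abs_condExp_sub_le hm hq_sm hq
    ((integrable_const 1).indicator hA) (hmul ▸ hq.indicator hA) hδ
  rwa [← integral_indicator hA, ← hmul]

theorem abs_setIntegral_compl_sub [IsProbabilityMeasure μ] {A : Set Ω} (hA : MeasurableSet A)
    {q : Ω → ℝ} (hq : Integrable q μ) :
    |∫ ω in Aᶜ, q ω ∂μ - (∫ ω, q ω ∂μ) * μ.real Aᶜ| =
      |∫ ω in A, q ω ∂μ - (∫ ω, q ω ∂μ) * μ.real A| := by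
  rw [setIntegral_compl hA hq, probReal_compl_eq_one_sub hA, ← abs_neg]
  ring_nf

theorem abs_sub_div_le_of_abs_sub_mul_le {e s P D c : ℝ} (hc : 0 < c) (hcP : c ≤ P)
    (hD : 0 ≤ D) (h : |s - e * P| ≤ D) : |e - s / P| ≤ D / c := by
  have hP : 0 < P := hc.trans_le hcP
  rw [show e - s / P = -(s - e * P) / P by field_simp; ring, abs_div, abs_neg, abs_of_pos hP]
  exact div_le_div₀ hD h hc hcP

theorem abs_integral_sub_setAverage_bool_le [IsProbabilityMeasure μ] {m : MeasurableSpace Ω}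
    (hm : m ≤ mΩ) {Y : Ω → Bool} (hY : Measurable[mΩ] Y) {q : Ω → ℝ}
    (hq_sm : StronglyMeasurable[m] q) (hq : Integrable q μ) {δ c : ℝ} (hδ_nonneg : 0 ≤ δ)
    (hδ : ∀ᵐ ω ∂μ, |μ[fun ω => if Y ω then (1 : ℝ) else 0 | m] ω - μ.real {ω | Y ω = true}| ≤ δ)
    (hc : 0 < c) {a : Bool} (hca : c ≤ μ.real {ω | Y ω = a}) :
    |∫ ω, q ω ∂μ - (∫ ω in {ω | Y ω = a}, q ω ∂μ) / μ.real {ω | Y ω = a}| ≤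
      δ * (∫ ω, |q ω| ∂μ) / c := by
  have hA : MeasurableSet[mΩ] {ω | Y ω = true} := hY (measurableSet_singleton true)
  have hindicator : (fun ω => if Y ω then (1 : ℝ) else 0) = {ω | Y ω = true}.indicator 1 := by
    ext ω
    by_cases h : Y ω <;> simp [h]
  have hbound := abs_setIntegral_sub_le_of_abs_condExp_indicator_sub_le hm hA hq_sm hq
    (hindicator ▸ hδ)
  refine abs_sub_div_le_of_abs_sub_mul_le hc hca (by positivity) ?_
  cases a
  · have hfalse : {ω | Y ω = false} = {ω | Y ω = true}ᶜ := by ext; simp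
    rwa [hfalse, abs_setIntegral_compl_sub hA hq]
  · exact hbound

end

theorem lemma_C6_first_general
    {Ω : Type*} [MeasurableSpace Ω] (μ : Measure Ω) [IsProbabilityMeasure μ]
    (p M : ℕ)
    (X : Ω → Fin p → Bool) (hX : Measurable X)
    (G : Fin M → Finset (Fin p))
    (honehot : ∀ᵐ ω ∂μ, ∀ m : Fin M, 1 < (G m).card →
        ((G m).filter (fun j => X ω j = true)).card = 1)
    (δ₀ : ℝ) (hδ₀_nonneg : 0 ≤ δ₀)
    (hδ₀ : ∀ m : Fin M, ∀ i ∈ G m, ∀ᵐ ω ∂μ,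
        |condProbOne μ X G m i ω - (μ {ω | X ω i = true}).toReal| ≤ δ₀)
    (pm1 : ℝ) (hpm1_pos : 0 < pm1)
    (hpm1 : ∀ m : Fin M, ∀ l ∈ G m, ∀ a : Bool, pm1 ≤ (μ {ω | X ω l = a}).toReal)
    (m : Fin M) (q : ({x // x ∈ gsetCompl G {m}} → Bool) → ℝ)
    (hq : Integrable (fun ω => q (fun i => X ω i.1)) μ) :
    ∀ᵐ ω ∂μ,
      |(∫ ω', q (fun i => X ω' i.1) ∂μ) -
          (μ[fun ω' => q (fun i => X ω' i.1) | coordSigma X (gset G {m})]) ω| ≤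
        δ₀ * (∫ ω', |q (fun i => X ω' i.1)| ∂μ) / pm1 := by
  have hq_sm : StronglyMeasurable[coordSigma X (gsetCompl G {m})]
      (fun ω => q fun i => X ω i.1) :=
    ((Measurable.of_discrete (f := q)).comp (comap_measurable _)).stronglyMeasurable
  have hσ : coordSigma X (gsetCompl G {m}) ≤ ‹MeasurableSpace Ω› :=
    (measurable_restrict_coords hX _).comap_le
  rw [gset, Finset.singleton_biUnion]
  filter_upwards [honehot, condExp_coordSigma_ae_eq_average hX hq (G m)] with ω hω hcond
  rw [hcond]
  rcases eq_empty_or_exists_coordAtom_ae_eq (honehot.mono fun ω h => h m) (hω m) with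
    hempty | ⟨i, hi, a, hatom⟩
  · have huniv : coordAtom X (G m) ω = Set.univ := by simp [coordAtom, hempty]
    rw [huniv, setIntegral_univ, probReal_univ, div_one, sub_self, abs_zero]
    positivity
  · rw [setIntegral_congr_set hatom, measureReal_congr hatom]
    exact abs_integral_sub_setAverage_bool_le hσ ((measurable_pi_apply i).comp hX) hq_sm hq
      hδ₀_nonneg (hδ₀ m i hi) hpm1_pos (hpm1 m i hi a)

/-- Lemma C.6, first assertion: for each group `m` and every function `q` of `X_{-𝒳(m)}`,
almost surely `|E q(X_{-𝒳(m)}) - E( q(X_{-𝒳(m)}) | X_{𝒳(m)} )|` is at most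
`δ₀ E|q(X_{-𝒳(m)})|` divided by `min_{m', l ∈ 𝒳(m'), a ∈ {0,1}} P(X_l = a)`. -/
theorem lemma_C6_first
    {Ω : Type*} [MeasurableSpace Ω] (μ : Measure Ω) [IsProbabilityMeasure μ]
    (p M : ℕ) (hM : 2 ≤ M)
    (X : Ω → Fin p → Bool) (hX : Measurable X)
    (G : Fin M → Finset (Fin p))
    (hdisj : ∀ l k : Fin M, l ≠ k → Disjoint (G l) (G k))
    (hcover : Finset.univ.biUnion G = (Finset.univ : Finset (Fin p)))
    (honehot : ∀ᵐ ω ∂μ, ∀ m : Fin M, 1 < (G m).card →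
        ((G m).filter (fun j => X ω j = true)).card = 1)
    (δ₀ : ℝ) (hδ₀_nonneg : 0 ≤ δ₀)
    (hδ₀ : ∀ m : Fin M, ∀ i ∈ G m, ∀ᵐ ω ∂μ,
        |condProbOne μ X G m i ω - (μ {ω | X ω i = true}).toReal| ≤ δ₀)
    (pm1 : ℝ) (hpm1_pos : 0 < pm1)
    (hpm1 : ∀ m : Fin M, ∀ l ∈ G m, ∀ a : Bool, pm1 ≤ (μ {ω | X ω l = a}).toReal)
    (m : Fin M) (q : ({x // x ∈ gsetCompl G {m}} → Bool) → ℝ)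
    (hq : Integrable (fun ω => q (fun i => X ω i.1)) μ) :
    ∀ᵐ ω ∂μ,
      |(∫ ω', q (fun i => X ω' i.1) ∂μ) -
          (μ[fun ω' => q (fun i => X ω' i.1) | coordSigma X (gset G {m})]) ω| ≤
        δ₀ * (∫ ω', |q (fun i => X ω' i.1)| ∂μ) / pm1 :=
  lemma_C6_first_general μ p M X hX G honehot δ₀ hδ₀_nonneg hδ₀ pm1 hpm1_pos hpm1 m q hq

end CT9
end
end

section
/- Lemma (C.6, third assertion). For every pair {l, k} ⊂ {1,…,M} and every measurable function q : ℝ^{p − #(𝒳(k)∪𝒳(l))} → ℝ with E|q(X_{−(𝒳(k)∪𝒳(l))})| < ∞, it holds almost surely that | E( q(X_{−(𝒳(k)∪𝒳(l))}) | X_{𝒳(k)}, X_{𝒳(l)} ) − E q(X_{−(𝒳(k)∪𝒳(l))}) | ≤ 3 δ₀ E|q(X_{−(𝒳(k)∪𝒳(l))})| / p_min, provided p_min > 0. -/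
open MeasureTheory ProbabilityTheory

noncomputable section

namespace CT11

/-- The sub-σ-algebra of `Ω` generated by the coordinates of `X` lying in `S`. -/
def coordSigma {Ω : Type*} [MeasurableSpace Ω] {p : ℕ} (X : Ω → Fin p → Bool)
    (S : Finset (Fin p)) : MeasurableSpace Ω :=
  MeasurableSpace.comap (fun ω => fun i : {x // x ∈ S} => X ω i.1) inferInstance

/-- `𝒳(J)`, the union of the feature groups indexed by `J`. -/
def gset {p M : ℕ} (G : Fin M → Finset (Fin p)) (J : Finset (Fin M)) : Finset (Fin p) :=
  J.biUnion G

/-- `{1,…,p} \ 𝒳(J)` as a finset. -/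
def gsetCompl {p M : ℕ} (G : Fin M → Finset (Fin p)) (J : Finset (Fin M)) :
    Finset (Fin p) :=
  (J.biUnion G)ᶜ

/-- The conditional probability `P(X_i = 1 | X_{-𝒳(m)})` as a random variable. -/
def condProbOne {Ω : Type*} [MeasurableSpace Ω] {p M : ℕ} (μ : Measure Ω)
    (X : Ω → Fin p → Bool) (G : Fin M → Finset (Fin p)) (m : Fin M) (i : Fin p) : Ω → ℝ :=
  μ[(fun ω => if X ω i then (1 : ℝ) else 0) | coordSigma X (gsetCompl G {m})]

/-!
Let `A` be the atom of `ω` for `(X_{𝒳(k)}, X_{𝒳(l)})` and `R` the remaining coordinates. The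
hypothesis on `δ₀` says that an event `{X_i = a}` is `δ₀`-nearly independent of the coordinates
outside the group of `i`: `|P(F ∩ {X_i = a}) - P(X_i = a) P(F)| ≤ δ₀ P(F)` for every such `F`.
By the one-hot encoding, `A` is a.s. the intersection of two such events, one from each group, so
chaining the estimate three times makes `A` `3 δ₀`-nearly independent of `X_R`. The
conditional expectation is constant on `A`, and summing the estimate over the finitely many
values of `X_R` bounds `P(A) |E(q | A) - E q|` by `3 δ₀ E|q|`; finally `P(A) ≥ p_min`.
-/

section NearIndependence

variable {Ω : Type*} {m m' m₁ m₂ : MeasurableSpace Ω} [mΩ : MeasurableSpace Ω] {μ : Measure Ω}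
  {δ δ' : ℝ} {E L : Set Ω}

def IsNearlyIndep (μ : Measure Ω) (m : MeasurableSpace Ω) (δ : ℝ) (E : Set Ω) : Prop :=
  ∀ F, MeasurableSet[m] F → |μ.real (F ∩ E) - μ.real E * μ.real F| ≤ δ * μ.real F

namespace IsNearlyIndep

lemma nonneg [IsProbabilityMeasure μ] (h : IsNearlyIndep μ m δ E) : 0 ≤ δ := by
  simpa using h Set.univ MeasurableSet.univ

lemma mono (h : IsNearlyIndep μ m δ E) (hm : m' ≤ m) (hδ : δ ≤ δ') :
    IsNearlyIndep μ m' δ' E := fun F hF =>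
  (h F (hm F hF)).trans (mul_le_mul_of_nonneg_right hδ measureReal_nonneg)

lemma congr_ae (h : IsNearlyIndep μ m δ E) (hEL : E =ᵐ[μ] L) : IsNearlyIndep μ m δ L :=
  fun F hF => by
    simpa only [measureReal_congr hEL, measureReal_congr (ae_eq_set_inter (ae_eq_refl F) hEL)]
      using h F hF

lemma compl [IsProbabilityMeasure μ] (hE : MeasurableSet E) (h : IsNearlyIndep μ m δ E) :
    IsNearlyIndep μ m δ Eᶜ := fun F hF => by
  have hsplit : μ.real (F ∩ E) + μ.real (F ∩ Eᶜ) = μ.real F := measureReal_inter_add_sdiff hE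
  rw [measureReal_compl hE, probReal_univ, ← abs_neg]
  convert h F hF using 2
  linarith

lemma inter [IsProbabilityMeasure μ] (hE : IsNearlyIndep μ m₁ δ E) (hL : IsNearlyIndep μ m₂ δ L)
    (hLm : MeasurableSet[m₁] L) : IsNearlyIndep μ (m₁ ⊓ m₂) (3 * δ) (E ∩ L) := by
  intro F hF
  obtain ⟨hF₁, hF₂⟩ := MeasurableSpace.measurableSet_inf.mp hF
  have hδ : 0 ≤ δ := hE.nonneg
  -- `P(F ∩ L ∩ E) - P(E ∩ L) P(F)` telescopes through `P(E) P(F ∩ L)` and `P(E) P(L) P(F)`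
  have h₁ := abs_le.mp (hE (F ∩ L) (hF₁.inter hLm))
  have h₂ := abs_le.mp (hE L hLm)
  have h₃ := abs_le.mp (hL F hF₂)
  have hFL : μ.real (F ∩ L) ≤ μ.real F := measureReal_mono Set.inter_subset_left
  have hE₁ : μ.real E ≤ 1 := measureReal_le_one
  have hL₁ : μ.real L ≤ 1 := measureReal_le_one
  have hE₀ : 0 ≤ μ.real E := measureReal_nonneg
  have hF₀ : 0 ≤ μ.real F := measureReal_nonneg
  rw [show F ∩ (E ∩ L) = F ∩ L ∩ E by ac_rfl, Set.inter_comm E L, abs_le]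
  constructor <;> linarith [mul_le_mul_of_nonneg_left h₃.1 hE₀, mul_le_mul_of_nonneg_left h₃.2 hE₀,
    mul_le_mul_of_nonneg_left h₂.1 hF₀, mul_le_mul_of_nonneg_left h₂.2 hF₀,
    mul_le_mul_of_nonneg_left hFL hδ, mul_le_mul_of_nonneg_right hE₁ (mul_nonneg hδ hF₀),
    mul_le_mul_of_nonneg_left hL₁ (mul_nonneg hδ hF₀)]

lemma univ [IsProbabilityMeasure μ] (hδ : 0 ≤ δ) : IsNearlyIndep μ m δ Set.univ := fun F _ => by
  simpa using mul_nonneg hδ measureReal_nonneg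

lemma of_le_bot [IsProbabilityMeasure μ] (hm : m ≤ ⊥) (hδ : 0 ≤ δ) : IsNearlyIndep μ m δ E := by
  intro F hF
  rcases MeasurableSpace.measurableSet_bot_iff.mp (hm F hF) with rfl | rfl <;> simp [hδ]

lemma of_condExp [IsFiniteMeasure μ] (hm : m ≤ mΩ) (hE : MeasurableSet E)
    (h : ∀ᵐ ω ∂μ, |μ[E.indicator 1 | m] ω - μ.real E| ≤ δ) : IsNearlyIndep μ m δ E := by
  intro F hF
  have hint : Integrable (E.indicator (1 : Ω → ℝ)) μ := (integrable_const 1).indicator hE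
  have hFE : μ.real (F ∩ E) = ∫ ω in F, μ[E.indicator 1 | m] ω ∂μ := by
    rw [setIntegral_condExp hm hint hF, integral_indicator_one hE, measureReal_restrict_apply hE,
      Set.inter_comm]
  have hdiff : μ.real (F ∩ E) - μ.real E * μ.real F =
      ∫ ω in F, (μ[E.indicator 1 | m] ω - μ.real E) ∂μ := by
    rw [hFE, integral_sub integrable_condExp.integrableOn (integrable_const _), setIntegral_const,
      smul_eq_mul, mul_comm]
  rw [hdiff, ← Real.norm_eq_abs]
  exact norm_setIntegral_le_of_norm_le_const_ae (measure_lt_top μ F) (ae_restrict_of_ae h)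

end IsNearlyIndep

end NearIndependence

section FiniteValued

variable {Ω β γ : Type*} [MeasurableSpace Ω] {μ : Measure Ω} [IsFiniteMeasure μ]
  [Fintype β] [mβ : MeasurableSpace β] [MeasurableSingletonClass β] {Y : Ω → β}
  [mγ : MeasurableSpace γ] [MeasurableSingletonClass γ] {Z : Ω → γ}

lemma setIntegral_comp_eq_sum (hY : Measurable Y) (q : β → ℝ) (S : Set Ω) :
    ∫ ω in S, q (Y ω) ∂μ = ∑ y, μ.real (Y ⁻¹' {y} ∩ S) * q y := by
  rw [← integral_map hY.aemeasurable (measurable_of_finite q).aestronglyMeasurable,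
    integral_fintype Integrable.of_finite]
  simp [Measure.real, Measure.map_apply hY (measurableSet_singleton _),
    Measure.restrict_apply (hY (measurableSet_singleton _))]

lemma integral_comp_eq_sum (hY : Measurable Y) (q : β → ℝ) :
    ∫ ω, q (Y ω) ∂μ = ∑ y, μ.real (Y ⁻¹' {y}) * q y := by
  simpa using setIntegral_comp_eq_sum (μ := μ) hY q Set.univ

lemma IsNearlyIndep.abs_setIntegral_sub_le {δ : ℝ} {A : Set Ω}
    (hA : IsNearlyIndep μ (mβ.comap Y) δ A) (hY : Measurable Y) (q : β → ℝ) :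
    |∫ ω in A, q (Y ω) ∂μ - μ.real A * ∫ ω, q (Y ω) ∂μ| ≤ δ * ∫ ω, |q (Y ω)| ∂μ := by
  rw [setIntegral_comp_eq_sum hY, integral_comp_eq_sum hY, integral_comp_eq_sum hY (|q ·|),
    Finset.mul_sum, Finset.mul_sum, ← Finset.sum_sub_distrib]
  refine (Finset.abs_sum_le_sum_abs _ _).trans (Finset.sum_le_sum fun y _ => ?_)
  have hy := hA _ (comap_measurable Y (measurableSet_singleton y))
  calc |μ.real (Y ⁻¹' {y} ∩ A) * q y - μ.real A * (μ.real (Y ⁻¹' {y}) * q y)|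
      = |q y| * |μ.real (Y ⁻¹' {y} ∩ A) - μ.real A * μ.real (Y ⁻¹' {y})| := by
        rw [← abs_mul]; ring_nf
    _ ≤ |q y| * (δ * μ.real (Y ⁻¹' {y})) := mul_le_mul_of_nonneg_left hy (abs_nonneg _)
    _ = δ * (μ.real (Y ⁻¹' {y}) * |q y|) := by ring

lemma ae_measureReal_preimage_singleton_pos [Countable γ] (hZ : Measurable Z) :
    ∀ᵐ ω ∂μ, 0 < μ.real (Z ⁻¹' {Z ω}) := by
  have h : ∀ᵐ z ∂μ.map Z, μ.map Z {z} ≠ 0 := ae_iff_of_countable.mpr fun _ hz => hz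
  filter_upwards [ae_of_ae_map hZ.aemeasurable h] with ω hω
  rw [Measure.map_apply hZ (measurableSet_singleton _)] at hω
  exact ENNReal.toReal_pos hω (measure_ne_top μ _)

lemma condExp_comap_mul_measureReal_preimage (hZ : Measurable Z) {f : Ω → ℝ}
    (hf : Integrable f μ) (ω : Ω) :
    μ[f | mγ.comap Z] ω * μ.real (Z ⁻¹' {Z ω}) = ∫ ω' in Z ⁻¹' {Z ω}, f ω' ∂μ := by
  rw [← setIntegral_condExp hZ.comap_le hf
      (comap_measurable Z (measurableSet_singleton _)),
    setIntegral_congr_fun (hZ (measurableSet_singleton _)) fun ω' hω' =>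
      (stronglyMeasurable_condExp (m := mγ.comap Z) (f := f) (μ := μ)).factorsThrough hω',
    setIntegral_const, smul_eq_mul, mul_comm]

theorem ae_abs_condExp_comap_sub_integral_le [Countable γ] (hY : Measurable Y)
    (hZ : Measurable Z) (q : β → ℝ) {ε : ℝ}
    (h : ∀ᵐ ω ∂μ, IsNearlyIndep μ (mβ.comap Y) (ε * μ.real (Z ⁻¹' {Z ω})) (Z ⁻¹' {Z ω})) :
    ∀ᵐ ω ∂μ, |μ[fun ω => q (Y ω) | mγ.comap Z] ω - ∫ ω, q (Y ω) ∂μ| ≤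
      ε * ∫ ω, |q (Y ω)| ∂μ := by
  filter_upwards [h, ae_measureReal_preimage_singleton_pos hZ] with ω hω hpos
  have hf : Integrable (fun ω => q (Y ω)) μ := Integrable.of_finite.comp_measurable hY
  refine le_of_mul_le_mul_right ?_ hpos
  calc |μ[fun ω => q (Y ω) | mγ.comap Z] ω - ∫ ω, q (Y ω) ∂μ| * μ.real (Z ⁻¹' {Z ω})
      = |(μ[fun ω => q (Y ω) | mγ.comap Z] ω - ∫ ω, q (Y ω) ∂μ) * μ.real (Z ⁻¹' {Z ω})| := by
        rw [abs_mul, abs_of_pos hpos]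
    _ = |∫ ω' in Z ⁻¹' {Z ω}, q (Y ω') ∂μ - μ.real (Z ⁻¹' {Z ω}) * ∫ ω, q (Y ω) ∂μ| := by
        rw [sub_mul, condExp_comap_mul_measureReal_preimage hZ hf, mul_comm]
    _ ≤ ε * μ.real (Z ⁻¹' {Z ω}) * ∫ ω, |q (Y ω)| ∂μ := hω.abs_setIntegral_sub_le hY q
    _ = ε * (∫ ω, |q (Y ω)| ∂μ) * μ.real (Z ⁻¹' {Z ω}) := by ring

end FiniteValued

section OneHot

variable {ι : Type*}

def IsOneHotOn (S : Finset ι) (x : ι → Bool) : Prop :=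
  1 < S.card → (S.filter fun j => x j = true).card = 1

lemma IsOneHotOn.exists_determining_coord {S : Finset ι} {x : ι → Bool} (hx : IsOneHotOn S x)
    (hS : S.Nonempty) :
    ∃ i ∈ S, ∀ y : ι → Bool, IsOneHotOn S y → y i = x i → ∀ j ∈ S, y j = x j := by
  rcases le_or_gt S.card 1 with hcard | hcard
  · obtain ⟨i, rfl⟩ := Finset.card_eq_one.mp (le_antisymm hcard hS.card_pos)
    exact ⟨i, Finset.mem_singleton_self i, fun y _ hyi j hj => Finset.mem_singleton.mp hj ▸ hyi⟩
  · obtain ⟨i, hxS⟩ := Finset.card_eq_one.mp (hx hcard)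
    obtain ⟨hi, hxi⟩ := Finset.mem_filter.mp (hxS ▸ Finset.mem_singleton_self i)
    refine ⟨i, hi, fun y hy hyi j hjS => ?_⟩
    have hyS : S.filter (fun j => y j = true) = {i} := by
      obtain ⟨i', hyS⟩ := Finset.card_eq_one.mp (hy hcard)
      have hmem : i ∈ S.filter (fun j => y j = true) := Finset.mem_filter.mpr ⟨hi, hyi.trans hxi⟩
      rw [hyS, Finset.mem_singleton] at hmem
      rw [hyS, hmem]
    have hj := congrArg (j ∈ ·) (hyS.trans hxS.symm)
    simp only [Finset.mem_filter, hjS, true_and, eq_iff_iff] at hj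
    exact Bool.eq_iff_iff.mpr hj

end OneHot

section Coordinates

variable {Ω : Type*} {p : ℕ} {X : Ω → Fin p → Bool}

def coordAtom (X : Ω → Fin p → Bool) (S : Finset (Fin p)) (ω : Ω) : Set Ω :=
  {ω' | ∀ i ∈ S, X ω' i = X ω i}

lemma coordAtom_eq_preimage (S : Finset (Fin p)) (ω : Ω) :
    coordAtom X S ω = (fun ω' => S.restrict (X ω')) ⁻¹' {S.restrict (X ω)} := by
  ext ω'
  simp [coordAtom, funext_iff]

lemma coordAtom_empty (ω : Ω) : coordAtom X ∅ ω = Set.univ := by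
  simp [coordAtom]

lemma coordAtom_union (S T : Finset (Fin p)) (ω : Ω) :
    coordAtom X (S ∪ T) ω = coordAtom X S ω ∩ coordAtom X T ω := by
  ext ω'
  simp only [coordAtom, Finset.mem_union, Set.mem_inter_iff]
  grind

variable [MeasurableSpace Ω]

lemma coordSigma_le (hX : Measurable X) (S : Finset (Fin p)) : coordSigma X S ≤ ‹_› :=
  ((Finset.measurable_restrict S).comp hX).comap_le

lemma coordSigma_mono {S T : Finset (Fin p)} (hST : S ⊆ T) : coordSigma X S ≤ coordSigma X T :=
  MeasurableSpace.comap_le_comap_of_eq_comp (Finset.restrict₂ (π := fun _ => Bool) hST)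
    (Finset.measurable_restrict₂ hST) rfl

lemma coordSigma_empty : coordSigma X ∅ = ⊥ := by
  have hconst : (fun ω (i : {x // x ∈ (∅ : Finset (Fin p))}) => X ω i.1) = fun _ => isEmptyElim :=
    funext fun _ => funext fun i => isEmptyElim i
  rw [coordSigma, hconst, MeasurableSpace.comap_const]

lemma measurableSet_coordAtom (S : Finset (Fin p)) (ω : Ω) :
    MeasurableSet[coordSigma X S] (coordAtom X S ω) := by
  rw [coordAtom_eq_preimage]
  exact comap_measurable _ (measurableSet_singleton _)

lemma coordAtom_ae_eq_coord {μ : Measure Ω} {S : Finset (Fin p)} {ω : Ω}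
    (honehot : ∀ᵐ ω' ∂μ, IsOneHotOn S (X ω')) (hω : IsOneHotOn S (X ω)) (hS : S.Nonempty) :
    ∃ i ∈ S, coordAtom X S ω =ᵐ[μ] {ω' | X ω' i = X ω i} := by
  obtain ⟨i, hi, hdet⟩ := hω.exists_determining_coord hS
  refine ⟨i, hi, Filter.eventuallyEq_set.mpr ?_⟩
  filter_upwards [honehot] with ω' hω'
  exact ⟨fun h => h i hi, hdet _ hω'⟩

end Coordinates

section FeatureGroups

variable {Ω : Type*} [MeasurableSpace Ω] {μ : Measure Ω} [IsProbabilityMeasure μ] {p M : ℕ}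
  {X : Ω → Fin p → Bool} {G : Fin M → Finset (Fin p)} {δ : ℝ}

lemma gsetCompl_singleton (m : Fin M) : gsetCompl G {m} = (G m)ᶜ := by
  simp [gsetCompl]

lemma gsetCompl_pair (k l : Fin M) : gsetCompl G {k, l} = (G k ∪ G l)ᶜ := by
  simp [gsetCompl, Finset.biUnion_insert]

lemma isNearlyIndep_coord_eq (hX : Measurable X) {m : Fin M} {i : Fin p}
    (h : ∀ᵐ ω ∂μ, |condProbOne μ X G m i ω - (μ {ω | X ω i = true}).toReal| ≤ δ) (a : Bool) :
    IsNearlyIndep μ (coordSigma X (gsetCompl G {m})) δ {ω | X ω i = a} := by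
  have hmeas : MeasurableSet {ω | X ω i = true} :=
    (measurable_pi_apply i).comp hX (measurableSet_singleton true)
  have htrue : IsNearlyIndep μ (coordSigma X (gsetCompl G {m})) δ {ω | X ω i = true} := by
    have hind : (fun ω => if X ω i then (1 : ℝ) else 0) = {ω | X ω i = true}.indicator 1 := by
      funext ω
      simp [Set.indicator_apply]
    rw [condProbOne, hind] at h
    exact .of_condExp (coordSigma_le hX _) hmeas h
  cases a
  · convert htrue.compl hmeas using 2
    ext ω
    simp
  · exact htrue

lemma isNearlyIndep_coordAtom (hX : Measurable X) {m : Fin M} {ω : Ω}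
    (honehot : ∀ᵐ ω' ∂μ, IsOneHotOn (G m) (X ω')) (hω : IsOneHotOn (G m) (X ω)) (hδ : 0 ≤ δ)
    (hcond : ∀ i ∈ G m, ∀ᵐ ω ∂μ,
      |condProbOne μ X G m i ω - (μ {ω | X ω i = true}).toReal| ≤ δ) :
    IsNearlyIndep μ (coordSigma X (gsetCompl G {m})) δ (coordAtom X (G m) ω) := by
  rcases (G m).eq_empty_or_nonempty with hG | hG
  · rw [hG, coordAtom_empty]
    exact .univ hδ
  · obtain ⟨i, hi, hae⟩ := coordAtom_ae_eq_coord honehot hω hG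
    exact (isNearlyIndep_coord_eq hX (hcond i hi) _).congr_ae hae.symm

lemma isNearlyIndep_coordAtom_union (hX : Measurable X) {k l : Fin M}
    (hdisj : Disjoint (G l) (G k)) {ω : Ω}
    (honehot : ∀ᵐ ω' ∂μ, ∀ m, IsOneHotOn (G m) (X ω')) (hω : ∀ m, IsOneHotOn (G m) (X ω))
    (hδ : 0 ≤ δ) (hcond : ∀ m, ∀ i ∈ G m, ∀ᵐ ω ∂μ,
      |condProbOne μ X G m i ω - (μ {ω | X ω i = true}).toReal| ≤ δ) :
    IsNearlyIndep μ (coordSigma X (gsetCompl G {k, l})) (3 * δ) (coordAtom X (G k ∪ G l) ω) := by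
  have hatom (m : Fin M) := isNearlyIndep_coordAtom hX (honehot.mono fun _ h => h m) (hω m) hδ
    (hcond m)
  have hl : MeasurableSet[coordSigma X (gsetCompl G {k})] (coordAtom X (G l) ω) := by
    refine coordSigma_mono ?_ _ (measurableSet_coordAtom _ _)
    rw [gsetCompl_singleton]
    exact hdisj.le_compl_right
  rw [coordAtom_union]
  refine ((hatom k).inter (hatom l) hl).mono
    (le_inf (coordSigma_mono ?_) (coordSigma_mono ?_)) le_rfl
  all_goals
    simp only [gsetCompl_pair, gsetCompl_singleton]
    exact Finset.compl_subset_compl.mpr (by simp)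

lemma pmin_le_measureReal_coordAtom_union {pmin : ℝ}
    (hcover : Finset.univ.biUnion G = Finset.univ)
    (honehot : ∀ᵐ ω' ∂μ, ∀ m, IsOneHotOn (G m) (X ω')) {ω : Ω}
    (hω : ∀ m, IsOneHotOn (G m) (X ω))
    (hpmin : ∀ l k : Fin M, l ≠ k → ∀ i ∈ G l, ∀ j ∈ G k, ∀ a b : Bool,
        pmin ≤ (μ {ω | X ω i = a ∧ X ω j = b}).toReal)
    {k l : Fin M} (hlk : l ≠ k) (hA : (G k ∪ G l).Nonempty)
    (hR : (gsetCompl G {k, l}).Nonempty) :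
    pmin ≤ μ.real (coordAtom X (G k ∪ G l) ω) := by
  -- if one of the two groups is empty, `hpmin` gets its second coordinate from the group of `r`
  obtain ⟨r, hr⟩ := hR
  obtain ⟨m, -, hrm⟩ := Finset.mem_biUnion.mp (hcover ▸ Finset.mem_univ r)
  have hmkl : m ≠ k ∧ m ≠ l := by
    rw [gsetCompl_pair, Finset.mem_compl, Finset.mem_union] at hr
    constructor <;> rintro rfl <;> tauto
  have hpair {a b : Fin M} (hab : a ≠ b) {i j : Fin p} (hi : i ∈ G a) (hj : j ∈ G b) {x y : Bool}
      {S : Set Ω} (hS : {ω' | X ω' i = x ∧ X ω' j = y} ≤ᵐ[μ] S) : pmin ≤ μ.real S :=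
    (hpmin a b hab i hi j hj x y).trans
      (ENNReal.toReal_mono (measure_ne_top μ S) (measure_mono_ae hS))
  have hcoord (n : Fin M) (hn : (G n).Nonempty) :=
    coordAtom_ae_eq_coord (honehot.mono fun _ h => h n) (hω n) hn
  rw [coordAtom_union]
  rcases (G k).eq_empty_or_nonempty with hk | hk <;> rcases (G l).eq_empty_or_nonempty with hl | hl
  · simp [hk, hl] at hA
  · obtain ⟨j, hj, hae⟩ := hcoord l hl
    rw [hk, coordAtom_empty, Set.univ_inter]
    refine hpair (x := X ω j) (y := true) hmkl.2.symm hj hrm (.trans ?_ hae.symm.le)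
    exact .of_forall fun _ => And.left
  · obtain ⟨i, hi, hae⟩ := hcoord k hk
    rw [hl, coordAtom_empty, Set.inter_univ]
    refine hpair (x := X ω i) (y := true) hmkl.1.symm hi hrm (.trans ?_ hae.symm.le)
    exact .of_forall fun _ => And.left
  · obtain ⟨i, hi, haek⟩ := hcoord k hk
    obtain ⟨j, hj, hael⟩ := hcoord l hl
    exact hpair hlk.symm hi hj (ae_eq_set_inter haek hael).symm.le

end FeatureGroups

theorem lemma_C6_third_general
    {Ω : Type*} [MeasurableSpace Ω] (μ : Measure Ω) [IsProbabilityMeasure μ]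
    (p M : ℕ)
    (X : Ω → Fin p → Bool) (hX : Measurable X)
    (G : Fin M → Finset (Fin p))
    (hdisj : ∀ l k : Fin M, l ≠ k → Disjoint (G l) (G k))
    (hcover : Finset.univ.biUnion G = (Finset.univ : Finset (Fin p)))
    (honehot : ∀ᵐ ω ∂μ, ∀ m : Fin M, 1 < (G m).card →
        ((G m).filter (fun j => X ω j = true)).card = 1)
    (δ₀ : ℝ) (hδ₀_nonneg : 0 ≤ δ₀)
    (hδ₀ : ∀ m : Fin M, ∀ i ∈ G m, ∀ᵐ ω ∂μ,
        |condProbOne μ X G m i ω - (μ {ω | X ω i = true}).toReal| ≤ δ₀)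
    (pmin : ℝ) (hpmin_pos : 0 < pmin)
    (hpmin : ∀ l k : Fin M, l ≠ k → ∀ i ∈ G l, ∀ j ∈ G k, ∀ a b : Bool,
        pmin ≤ (μ {ω | X ω i = a ∧ X ω j = b}).toReal)
    (l k : Fin M) (hlk : l ≠ k)
    (q : ({x // x ∈ gsetCompl G {k, l}} → Bool) → ℝ) :
    ∀ᵐ ω ∂μ,
      |(μ[fun ω' => q (fun i => X ω' i.1) | coordSigma X (G k ∪ G l)]) ω -
          ∫ ω', q (fun i => X ω' i.1) ∂μ| ≤
        3 * δ₀ * (∫ ω', |q (fun i => X ω' i.1)| ∂μ) / pmin := by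
  have hatom : ∀ᵐ ω ∂μ, IsNearlyIndep μ (coordSigma X (gsetCompl G {k, l}))
      (3 * δ₀ / pmin * μ.real (coordAtom X (G k ∪ G l) ω)) (coordAtom X (G k ∪ G l) ω) := by
    filter_upwards [honehot] with ω hω
    have hε : 0 ≤ 3 * δ₀ / pmin * μ.real (coordAtom X (G k ∪ G l) ω) := by positivity
    rcases (gsetCompl G {k, l}).eq_empty_or_nonempty with hR | hR
    · exact .of_le_bot (hR ▸ coordSigma_empty).le hε
    rcases (G k ∪ G l).eq_empty_or_nonempty with hA | hA
    · rw [hA, coordAtom_empty]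
      exact .univ (by positivity)
    have hpA := pmin_le_measureReal_coordAtom_union hcover honehot hω hpmin hlk hA hR
    refine (isNearlyIndep_coordAtom_union hX (hdisj l k hlk) honehot hω hδ₀_nonneg hδ₀).mono
      le_rfl ?_
    rw [div_mul_eq_mul_div, le_div_iff₀ hpmin_pos]
    gcongr
  simp only [coordAtom_eq_preimage] at hatom
  filter_upwards [ae_abs_condExp_comap_sub_integral_le ((Finset.measurable_restrict _).comp hX)
    ((Finset.measurable_restrict _).comp hX) q hatom] with ω hω
  rwa [mul_div_right_comm]

/-- Lemma C.6, third assertion: for groups `l ≠ k` and every function `q` of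
`X_{-(𝒳(k) ∪ 𝒳(l))}`, almost surely
`|E( q | X_{𝒳(k)}, X_{𝒳(l)} ) - E q| ≤ 3 δ₀ E|q| / p_min`. -/
theorem lemma_C6_third
    {Ω : Type*} [MeasurableSpace Ω] (μ : Measure Ω) [IsProbabilityMeasure μ]
    (p M : ℕ) (hM : 2 ≤ M)
    (X : Ω → Fin p → Bool) (hX : Measurable X)
    (G : Fin M → Finset (Fin p))
    (hdisj : ∀ l k : Fin M, l ≠ k → Disjoint (G l) (G k))
    (hcover : Finset.univ.biUnion G = (Finset.univ : Finset (Fin p)))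
    (honehot : ∀ᵐ ω ∂μ, ∀ m : Fin M, 1 < (G m).card →
        ((G m).filter (fun j => X ω j = true)).card = 1)
    (δ₀ : ℝ) (hδ₀_nonneg : 0 ≤ δ₀)
    (hδ₀ : ∀ m : Fin M, ∀ i ∈ G m, ∀ᵐ ω ∂μ,
        |condProbOne μ X G m i ω - (μ {ω | X ω i = true}).toReal| ≤ δ₀)
    (pmin : ℝ) (hpmin_pos : 0 < pmin)
    (hpmin : ∀ l k : Fin M, l ≠ k → ∀ i ∈ G l, ∀ j ∈ G k, ∀ a b : Bool,
        pmin ≤ (μ {ω | X ω i = a ∧ X ω j = b}).toReal)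
    (l k : Fin M) (hlk : l ≠ k)
    (q : ({x // x ∈ gsetCompl G {k, l}} → Bool) → ℝ)
    (hq : Integrable (fun ω => q (fun i => X ω i.1)) μ) :
    ∀ᵐ ω ∂μ,
      |(μ[fun ω' => q (fun i => X ω' i.1) | coordSigma X (G k ∪ G l)]) ω -
          ∫ ω', q (fun i => X ω' i.1) ∂μ| ≤
        3 * δ₀ * (∫ ω', |q (fun i => X ω' i.1)| ∂μ) / pmin :=
  lemma_C6_third_general μ p M X hX G hdisj hcover honehot δ₀ hδ₀_nonneg hδ₀ pmin hpmin_pos hpmin l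
    k hlk q

end CT11
end
end

section
/- Bias bound for additive-effect estimation (claim (B.13) in the proof of the sure-screening theorem, stated in generalized form). Assume E f(X) = 0, E[f(X)²] < ∞, and p_min > 0. Let m ∈ {1,…,M} and let R : {0,1}^p → ℝ be measurable with respect to X_{−𝒳(m)} only (i.e., R(X) is a measurable function of X_{−𝒳(m)}), with E R(X) = 0 and E|R(X)| ≤ 2 √(E[f(X)²]). Then | E[ ( E( f(X) − R(X) | X_{𝒳(m)} ) )² ] − Var(g_m(X)) | ≤ 21 δ₀ p_min^{−2} E[f(X)²]. -/
/-!
Write `T = σ(X_{𝒳(m)})`, `S = σ(X_{-𝒳(m)})`, `h = E(f(X) | S)` and `u = h - R(X)`. Then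
`E(f(X) - R(X) | T) - g_m = E(u | T)` with `u` `S`-measurable and centred, so the two second
moments differ by at most `‖E(u | T)‖_∞ (‖E(f(X) - R(X) | T)‖₁ + ‖g_m‖₁)`. On an atom `A` of `T`
of positive mass, `E(u | T) = ∫_A u / P(A)`; by the one-hot structure `A` is a.s. an event
`{X_i = b}` with `i ∈ 𝒳(m)`, so `P(A) ≥ p_min`, and pulling `u` out of `E(1{X_i = 1} | S)` gives
`|∫_A u| ≤ δ₀ ‖u‖₁`. Every L¹ norm involved is at most `3 √(E f(X)²)`, whence the constant
`15 ≤ 21`.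
-/

open MeasureTheory ProbabilityTheory

noncomputable section

namespace CT12

/-- The sub-σ-algebra of `Ω` generated by the coordinates of `X` lying in `S`. -/
def coordSigma {Ω : Type*} [MeasurableSpace Ω] {p : ℕ} (X : Ω → Fin p → Bool)
    (S : Finset (Fin p)) : MeasurableSpace Ω :=
  MeasurableSpace.comap (fun ω => fun i : {x // x ∈ S} => X ω i.1) inferInstance

/-- `𝒳(J)`, the union of the feature groups indexed by `J`. -/
def gset {p M : ℕ} (G : Fin M → Finset (Fin p)) (J : Finset (Fin M)) : Finset (Fin p) :=
  J.biUnion G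

/-- `{1,…,p} \ 𝒳(J)` as a finset. -/
def gsetCompl {p M : ℕ} (G : Fin M → Finset (Fin p)) (J : Finset (Fin M)) :
    Finset (Fin p) :=
  (J.biUnion G)ᶜ

/-- The conditional probability `P(X_i = 1 | X_{-𝒳(m)})` as a random variable. -/
def condProbOne {Ω : Type*} [MeasurableSpace Ω] {p M : ℕ} (μ : Measure Ω)
    (X : Ω → Fin p → Bool) (G : Fin M → Finset (Fin p)) (m : Fin M) (i : Fin p) : Ω → ℝ :=
  μ[(fun ω => if X ω i then (1 : ℝ) else 0) | coordSigma X (gsetCompl G {m})]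

/-- `g_J(X) = E( f(X) - E(f(X) | X_{-𝒳(J)}) | X_{𝒳(J)} )`. -/
def gEff {Ω : Type*} [MeasurableSpace Ω] {p M : ℕ} (μ : Measure Ω)
    (X : Ω → Fin p → Bool) (G : Fin M → Finset (Fin p)) (f : (Fin p → Bool) → ℝ)
    (J : Finset (Fin M)) : Ω → ℝ :=
  μ[(fun ω => f (X ω) - (μ[fun ω' => f (X ω') | coordSigma X (gsetCompl G J)]) ω) |
    coordSigma X (gset G J)]

section Generic

variable {Ω : Type*} {mΩ : MeasurableSpace Ω} {μ : Measure Ω}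

theorem eq_of_measurable_comap {V : Type*} {mV : MeasurableSpace V} {r : Ω → V} {g : Ω → ℝ}
    (hg : Measurable[mV.comap r] g) {x y : Ω} (hxy : r x = r y) : g x = g y := by
  obtain ⟨B, -, hB⟩ := MeasurableSpace.measurableSet_comap.mp (hg (measurableSet_singleton (g x)))
  have hx : x ∈ r ⁻¹' B := hB ▸ rfl
  have hy : y ∈ g ⁻¹' {g x} := hB ▸ (show r y ∈ B from hxy ▸ hx)
  exact hy.symm

theorem ae_measure_preimage_singleton_ne_zero {V : Type*} [Countable V] (r : Ω → V) :
    ∀ᵐ ω ∂μ, μ (r ⁻¹' {r ω}) ≠ 0 := by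
  rw [ae_iff]
  refine measure_mono_null (fun ω hω => ?_)
    (measure_iUnion_null fun v : {v // μ (r ⁻¹' {v}) = 0} => v.2)
  exact Set.mem_iUnion.2 ⟨⟨r ω, not_not.1 hω⟩, rfl⟩

section Comap

variable [IsFiniteMeasure μ] {V : Type*} [MeasurableSpace V] [MeasurableSingletonClass V]
  {r : Ω → V} {g : Ω → ℝ}

theorem measureReal_preimage_mul_condExp_comap (hr : Measurable r) (hg : Integrable g μ) (ω : Ω) :
    μ.real (r ⁻¹' {r ω}) * μ[g | MeasurableSpace.comap r ‹_›] ω =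
      ∫ x in r ⁻¹' {r ω}, g x ∂μ := by
  have hconst : ∀ x ∈ r ⁻¹' {r ω}, μ[g | MeasurableSpace.comap r ‹_›] x =
      μ[g | MeasurableSpace.comap r ‹_›] ω := fun x hx =>
    eq_of_measurable_comap stronglyMeasurable_condExp.measurable hx
  rw [← setIntegral_condExp hr.comap_le hg ⟨{r ω}, measurableSet_singleton _, rfl⟩,
    setIntegral_congr_fun (hr (measurableSet_singleton _)) hconst, setIntegral_const,
    smul_eq_mul]

theorem ae_abs_condExp_comap_le [Countable V] (hr : Measurable r) (hg : Integrable g μ) {c : ℝ}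
    (hc : ∀ v, μ (r ⁻¹' {v}) ≠ 0 → |∫ x in r ⁻¹' {v}, g x ∂μ| ≤ c * μ.real (r ⁻¹' {v})) :
    ∀ᵐ ω ∂μ, |μ[g | MeasurableSpace.comap r ‹_›] ω| ≤ c := by
  filter_upwards [ae_measure_preimage_singleton_ne_zero r] with ω hω
  have hpos : 0 < μ.real (r ⁻¹' {r ω}) := ENNReal.toReal_pos hω (measure_ne_top _ _)
  rw [← mul_le_mul_iff_of_pos_left hpos, ← abs_of_pos hpos, ← abs_mul,
    measureReal_preimage_mul_condExp_comap hr hg, abs_of_pos hpos, mul_comm]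
  exact hc _ hω

end Comap

theorem abs_integral_mul_le_of_ae_abs_condExp_sub_le [IsFiniteMeasure μ] {m : MeasurableSpace Ω}
    (hm : m ≤ mΩ) {u φ : Ω → ℝ} (hu : StronglyMeasurable[m] u) (hu_int : Integrable u μ)
    (hu0 : ∫ ω, u ω ∂μ = 0) (hφ : Integrable φ μ) (huφ : Integrable (u * φ) μ) {c δ : ℝ}
    (hδ : ∀ᵐ ω ∂μ, |μ[φ | m] ω - c| ≤ δ) :
    |∫ ω, u ω * φ ω ∂μ| ≤ δ * ∫ ω, |u ω| ∂μ := by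
  have hpull : μ[u * φ | m] =ᵐ[μ] u * μ[φ | m] := condExp_mul_of_stronglyMeasurable_left hu huφ hφ
  have hcentered : Integrable (fun ω => u ω * (μ[φ | m] ω - c)) μ :=
    hu_int.mul_bdd (integrable_condExp.sub (integrable_const c)).aestronglyMeasurable
      (hδ.mono fun ω h => by rwa [Real.norm_eq_abs])
  calc |∫ ω, u ω * φ ω ∂μ| = |∫ ω, u ω * (μ[φ | m] ω - c) + c * u ω ∂μ| := by
        change |∫ ω, (u * φ) ω ∂μ| = _
        rw [← integral_condExp hm]
        exact congrArg _ (integral_congr_ae (hpull.mono fun ω h => by rw [h, Pi.mul_apply]; ring))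
    _ = |∫ ω, u ω * (μ[φ | m] ω - c) ∂μ| := by
        rw [integral_add hcentered (hu_int.const_mul c), integral_const_mul, hu0, mul_zero,
          add_zero]
    _ ≤ ∫ ω, |u ω * (μ[φ | m] ω - c)| ∂μ := abs_integral_le_integral_abs
    _ ≤ ∫ ω, δ * |u ω| ∂μ := by
        refine integral_mono_ae hcentered.abs (hu_int.abs.const_mul δ) ?_
        filter_upwards [hδ] with ω h
        rw [abs_mul, mul_comm]
        exact mul_le_mul_of_nonneg_right h (abs_nonneg _)
    _ = δ * ∫ ω, |u ω| ∂μ := integral_const_mul δ _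

theorem abs_integral_sq_sub_integral_sq_le [IsFiniteMeasure μ] {a b : Ω → ℝ} (ha : MemLp a 2 μ)
    (hb : MemLp b 2 μ) {c : ℝ} (hab : ∀ᵐ ω ∂μ, |a ω - b ω| ≤ c) :
    |∫ ω, a ω ^ 2 ∂μ - ∫ ω, b ω ^ 2 ∂μ| ≤ c * (∫ ω, |a ω| ∂μ + ∫ ω, |b ω| ∂μ) := by
  rw [← integral_sub ha.integrable_sq hb.integrable_sq,
    ← integral_add (ha.integrable one_le_two).abs (hb.integrable one_le_two).abs,
    ← integral_const_mul]
  refine abs_integral_le_integral_abs.trans (integral_mono_ae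
    (ha.integrable_sq.sub hb.integrable_sq).abs
    (((ha.integrable one_le_two).abs.add (hb.integrable one_le_two).abs).const_mul c) ?_)
  filter_upwards [hab] with ω h
  calc |a ω ^ 2 - b ω ^ 2| = |a ω - b ω| * |a ω + b ω| := by rw [← abs_mul]; ring_nf
    _ ≤ c * (|a ω| + |b ω|) :=
        mul_le_mul h (abs_add_le _ _) (abs_nonneg _) ((abs_nonneg _).trans h)

theorem integral_abs_le_sqrt_integral_sq [IsProbabilityMeasure μ] {g : Ω → ℝ} (hg : MemLp g 2 μ) :
    ∫ ω, |g ω| ∂μ ≤ √(∫ ω, g ω ^ 2 ∂μ) := by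
  have h := variance_nonneg |g| μ
  rw [variance_eq_sub hg.abs] at h
  refine (le_abs_self _).trans (Real.abs_le_sqrt ?_)
  simpa using h

theorem integral_abs_sub_le {a b : Ω → ℝ} (ha : Integrable a μ) (hb : Integrable b μ) :
    ∫ ω, |a ω - b ω| ∂μ ≤ ∫ ω, |a ω| ∂μ + ∫ ω, |b ω| ∂μ := by
  rw [← integral_add ha.abs hb.abs]
  exact integral_mono (ha.sub hb).abs (ha.abs.add hb.abs) fun ω => abs_sub _ _

theorem memLp_comp_of_finite {α : Type*} [Finite α] [MeasurableSpace α]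
    [MeasurableSingletonClass α] [IsFiniteMeasure μ] {X : Ω → α} (hX : Measurable X) (F : α → ℝ)
    (q : ENNReal) : MemLp (fun ω => F (X ω)) q μ := by
  obtain ⟨C, hC⟩ : ∃ C, ∀ x, |F x| ≤ C := Finite.exists_le _
  exact MemLp.of_bound ((measurable_of_countable F).comp hX).aestronglyMeasurable C
    (ae_of_all _ fun ω => hC (X ω))

theorem abs_integral_sq_condExp_sub_variance_le [IsProbabilityMeasure μ]
    {T S : MeasurableSpace Ω} (hT : T ≤ mΩ) (hS : S ≤ mΩ) {F R : Ω → ℝ} (hF : MemLp F 2 μ)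
    (hR : MemLp R 2 μ) (hR1 : ∫ ω, |R ω| ∂μ ≤ 2 * √(∫ ω, F ω ^ 2 ∂μ))
    {κ : ℝ} (hκ : 0 ≤ κ)
    (hcondExp : ∀ᵐ ω ∂μ, |μ[fun ω => μ[F | S] ω - R ω | T] ω| ≤
      κ * ∫ ω, |μ[F | S] ω - R ω| ∂μ) :
    |∫ ω, (μ[fun ω => F ω - R ω | T]) ω ^ 2 ∂μ - variance (μ[fun ω => F ω - μ[F | S] ω | T]) μ|
      ≤ 15 * κ * ∫ ω, F ω ^ 2 ∂μ := by
  set h := μ[F | S]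
  have hh : MemLp h 2 μ := hF.condExp one_le_two
  have hFR : MemLp (fun ω => F ω - R ω) 2 μ := hF.sub hR
  have hFh : MemLp (fun ω => F ω - h ω) 2 μ := hF.sub hh
  have hdiff : ∀ᵐ ω ∂μ, |μ[fun ω => F ω - R ω | T] ω - μ[fun ω => F ω - h ω | T] ω| ≤
      κ * ∫ ω, |h ω - R ω| ∂μ := by
    have hsub := condExp_sub (hFR.integrable one_le_two) (hFh.integrable one_le_two) T
    have hu_eq : (fun ω => F ω - R ω) - (fun ω => F ω - h ω) = fun ω => h ω - R ω := by
      funext ω; simp only [Pi.sub_apply]; ring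
    rw [hu_eq] at hsub
    filter_upwards [hsub, hcondExp] with ω h₁ h₂
    rwa [h₁] at h₂
  have hvar : variance (μ[fun ω => F ω - h ω | T]) μ =
      ∫ ω, (μ[fun ω => F ω - h ω | T]) ω ^ 2 ∂μ := by
    refine variance_of_integral_eq_zero integrable_condExp.aemeasurable ?_
    rw [integral_condExp hT, integral_sub (hF.integrable one_le_two) (hh.integrable one_le_two),
      integral_condExp hS, sub_self]
  set s := √(∫ ω, F ω ^ 2 ∂μ)
  have hF_abs : ∫ ω, |F ω| ∂μ ≤ s := integral_abs_le_sqrt_integral_sq hF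
  have hh_abs : ∫ ω, |h ω| ∂μ ≤ s := (integral_abs_condExp_le _).trans hF_abs
  have hu_abs : ∫ ω, |h ω - R ω| ∂μ ≤ 3 * s := by
    linarith [integral_abs_sub_le (hh.integrable one_le_two) (hR.integrable one_le_two)]
  have hFR_abs : ∫ ω, |μ[fun ω => F ω - R ω | T] ω| ∂μ ≤ 3 * s := by
    linarith [integral_abs_condExp_le (μ := μ) (m := T) (fun ω => F ω - R ω),
      integral_abs_sub_le (hF.integrable one_le_two) (hR.integrable one_le_two)]
  have hFh_abs : ∫ ω, |μ[fun ω => F ω - h ω | T] ω| ∂μ ≤ 2 * s := by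
    linarith [integral_abs_condExp_le (μ := μ) (m := T) (fun ω => F ω - h ω),
      integral_abs_sub_le (hF.integrable one_le_two) (hh.integrable one_le_two)]
  rw [hvar]
  calc _ ≤ κ * (∫ ω, |h ω - R ω| ∂μ) * (∫ ω, |μ[fun ω => F ω - R ω | T] ω| ∂μ +
          ∫ ω, |μ[fun ω => F ω - h ω | T] ω| ∂μ) :=
        abs_integral_sq_sub_integral_sq_le (hFR.condExp one_le_two) (hFh.condExp one_le_two) hdiff
    _ ≤ κ * (3 * s) * (3 * s + 2 * s) := by gcongr
    _ = 15 * κ * (s * s) := by ring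
    _ = 15 * κ * ∫ ω, F ω ^ 2 ∂μ := by
        rw [Real.mul_self_sqrt (integral_nonneg fun ω => sq_nonneg _)]

end Generic

section OneHot

variable {ι : Type*} {s : Finset ι}

theorem exists_mem_forall_eq_true_iff {y : ι → Bool} (hy : (s.filter (y · = true)).card = 1) :
    ∃ i ∈ s, ∀ j ∈ s, y j = true ↔ j = i := by
  obtain ⟨i, hi⟩ := Finset.card_eq_one.1 hy
  have hmem : ∀ j, j ∈ s.filter (y · = true) ↔ j = i := by simp [hi]
  refine ⟨i, (Finset.mem_filter.1 ((hmem i).2 rfl)).1, fun j hj => ?_⟩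
  rw [← hmem, Finset.mem_filter, and_iff_right hj]

theorem exists_coord_iff_eqOn_of_oneHot (hs : s.Nonempty) {x : ι → Bool}
    (hx : 1 < s.card → (s.filter (x · = true)).card = 1) :
    ∃ i ∈ s, ∃ b : Bool, ∀ y : ι → Bool, (1 < s.card → (s.filter (y · = true)).card = 1) →
      ((∀ j ∈ s, y j = x j) ↔ y i = b) := by
  rcases (Finset.one_le_card.2 hs).eq_or_lt with hcard | hcard
  · obtain ⟨i, rfl⟩ := Finset.card_eq_one.1 hcard.symm
    exact ⟨i, Finset.mem_singleton_self i, x i, fun y _ => by simp⟩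
  · obtain ⟨i, hi, hxi⟩ := exists_mem_forall_eq_true_iff (hx hcard)
    refine ⟨i, hi, true, fun y hy => ⟨fun h => (h i hi).trans ((hxi i hi).2 rfl), fun h j hj => ?_⟩⟩
    obtain ⟨i', -, hyi'⟩ := exists_mem_forall_eq_true_iff (hy hcard)
    rw [Bool.eq_iff_iff, hyi' j hj, hxi j hj, (hyi' i hi).1 h]

end OneHot

section Coordinates

variable {Ω : Type*} {mΩ : MeasurableSpace Ω} {μ : Measure Ω} {p : ℕ} {X : Ω → Fin p → Bool}

-- `coordSigma X S` is by definition the comap along `coordRestrict X S`.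
def coordRestrict (X : Ω → Fin p → Bool) (S : Finset (Fin p)) : Ω → ({x // x ∈ S} → Bool) :=
  fun ω i => X ω i.1

theorem measurable_coordRestrict (hX : Measurable X) (S : Finset (Fin p)) :
    Measurable (coordRestrict X S) :=
  measurable_pi_lambda _ fun i => (measurable_pi_apply i.1).comp hX

theorem coordSigma_le (hX : Measurable X) (S : Finset (Fin p)) :
    coordSigma X S ≤ mΩ :=
  (measurable_coordRestrict hX S).comap_le

theorem measurable_coordSigma_comp {S : Finset (Fin p)} {F : (Fin p → Bool) → ℝ}
    (hF : ∀ x x', (∀ j ∈ S, x j = x' j) → F x = F x') :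
    Measurable[coordSigma X S] fun ω => F (X ω) := by
  let F' : ({x // x ∈ S} → Bool) → ℝ := fun v => F fun j => if hj : j ∈ S then v ⟨j, hj⟩ else false
  have hfactor : (fun ω => F (X ω)) = F' ∘ coordRestrict X S :=
    funext fun ω => hF _ _ fun j hj => by simp [coordRestrict, hj]
  rw [hfactor]
  exact (measurable_of_countable F').comp (Measurable.of_comap_le le_rfl)

theorem exists_coord_preimage_ae_eq {s : Finset (Fin p)} (hs : s.Nonempty)
    (honehot : ∀ᵐ ω ∂μ, 1 < s.card → (s.filter (fun j => X ω j = true)).card = 1)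
    {v : {x // x ∈ s} → Bool} (hv : μ (coordRestrict X s ⁻¹' {v}) ≠ 0) :
    ∃ i ∈ s, ∃ b : Bool, coordRestrict X s ⁻¹' {v} =ᵐ[μ] {ω | X ω i = b} := by
  obtain ⟨ω₁, hω₁v, hω₁⟩ := nonempty_of_measure_ne_zero (by rwa [measure_inter_conull honehot])
  obtain ⟨i, hi, b, hiff⟩ := exists_coord_iff_eqOn_of_oneHot hs hω₁
  refine ⟨i, hi, b, Filter.eventuallyEq_set.2 ?_⟩
  filter_upwards [honehot] with ω hω
  rw [← hiff _ hω, Set.mem_preimage, Set.mem_singleton_iff, ← hω₁v]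
  simp [coordRestrict, funext_iff]

theorem abs_setIntegral_coord_eq_le [IsFiniteMeasure μ] (hX : Measurable X)
    {m : MeasurableSpace Ω} (hm : m ≤ mΩ) {i : Fin p} {c δ : ℝ}
    (hδ : ∀ᵐ ω ∂μ, |μ[(fun ω => if X ω i then (1 : ℝ) else 0) | m] ω - c| ≤ δ)
    {u : Ω → ℝ} (hu : StronglyMeasurable[m] u) (hu_int : Integrable u μ)
    (hu0 : ∫ ω, u ω ∂μ = 0) (b : Bool) :
    |∫ ω in {ω | X ω i = b}, u ω ∂μ| ≤ δ * ∫ ω, |u ω| ∂μ := by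
  have hB : MeasurableSet[mΩ] {ω | X ω i = true} :=
    (measurable_pi_apply i).comp hX (measurableSet_singleton true)
  have hind : {ω | X ω i = true}.indicator u = fun ω => u ω * if X ω i then 1 else 0 := by
    funext ω
    by_cases h : X ω i <;> simp [h]
  have hφ : Integrable (fun ω => if X ω i then (1 : ℝ) else 0) μ :=
    memLp_comp_of_finite hX (fun x => if x i then (1 : ℝ) else 0) 1 |>.integrable le_rfl
  have htrue : |∫ ω in {ω | X ω i = true}, u ω ∂μ| ≤ δ * ∫ ω, |u ω| ∂μ := by
    rw [← integral_indicator hB, hind]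
    exact abs_integral_mul_le_of_ae_abs_condExp_sub_le hm hu hu_int hu0 hφ
      (hind ▸ hu_int.indicator hB :) hδ
  cases b
  · have hcompl : {ω | X ω i = false} = {ω | X ω i = true}ᶜ := by ext; simp
    rw [hcompl, ← abs_neg, ← eq_neg_of_add_eq_zero_left ((integral_add_compl hB hu_int).trans hu0)]
    exact htrue
  · exact htrue

theorem abs_setIntegral_preimage_coordRestrict_le [IsProbabilityMeasure μ] (hX : Measurable X)
    {s : Finset (Fin p)}
    (honehot : ∀ᵐ ω ∂μ, 1 < s.card → (s.filter (fun j => X ω j = true)).card = 1)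
    {δ pmin : ℝ} (hδ_nonneg : 0 ≤ δ)
    (hδ : ∀ i ∈ s, ∀ᵐ ω ∂μ, |μ[(fun ω => if X ω i then (1 : ℝ) else 0) | coordSigma X sᶜ] ω -
      (μ {ω | X ω i = true}).toReal| ≤ δ)
    (hpmin_pos : 0 < pmin)
    (hpmin : ∀ i ∈ s, ∀ j ∉ s, ∀ a b : Bool, pmin ≤ (μ {ω | X ω i = a ∧ X ω j = b}).toReal)
    {u : Ω → ℝ} (hu : StronglyMeasurable[coordSigma X sᶜ] u) (hu_int : Integrable u μ)
    (hu0 : ∫ ω, u ω ∂μ = 0) (v : {x // x ∈ s} → Bool) (hv : μ (coordRestrict X s ⁻¹' {v}) ≠ 0) :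
    |∫ ω in coordRestrict X s ⁻¹' {v}, u ω ∂μ| ≤
      δ * pmin⁻¹ ^ 2 * (∫ ω, |u ω| ∂μ) * μ.real (coordRestrict X s ⁻¹' {v}) := by
  set A := coordRestrict X s ⁻¹' {v}
  rcases s.eq_empty_or_nonempty with rfl | hs
  · have hA : A = Set.univ := Set.eq_univ_of_forall fun ω => Subsingleton.elim _ _
    rw [hA, setIntegral_univ, hu0, abs_zero]
    positivity
  rcases sᶜ.eq_empty_or_nonempty with hsc | ⟨j, hj⟩
  · -- `coordSigma X sᶜ` is trivial, so `u` is constant, hence zero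
    have : IsEmpty {x // x ∈ sᶜ} := ⟨fun x => by simpa [hsc] using x.2⟩
    have hconst : ∀ ω ω', u ω = u ω' := fun ω ω' =>
      eq_of_measurable_comap hu.measurable (Subsingleton.elim (coordRestrict X sᶜ ω) _)
    have hzero : ∀ ω, u ω = 0 := fun ω => by
      rw [← hu0, integral_congr_ae (ae_of_all _ fun ω' => hconst ω' ω)]
      simp
    simp [hzero]
  obtain ⟨i, hi, b, hA⟩ := exists_coord_preimage_ae_eq hs honehot hv
  have hpmin_le : pmin ≤ μ.real A := by
    rw [measureReal_congr hA]
    exact (hpmin i hi j (Finset.mem_compl.1 hj) b true).trans (measureReal_mono fun ω h => h.1)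
  have hpmin_sq_le : pmin ^ 2 ≤ μ.real A := by
    have := hpmin_le.trans measureReal_le_one
    nlinarith
  calc |∫ ω in A, u ω ∂μ| ≤ δ * ∫ ω, |u ω| ∂μ := by
        rw [setIntegral_congr_set hA]
        exact abs_setIntegral_coord_eq_le hX (coordSigma_le hX sᶜ) (hδ i hi) hu hu_int hu0 b
    _ ≤ δ * (∫ ω, |u ω| ∂μ) * (pmin⁻¹ ^ 2 * μ.real A) := by
        refine le_mul_of_one_le_right (by positivity) ?_
        rwa [inv_pow, inv_mul_eq_div, one_le_div (by positivity)]
    _ = δ * pmin⁻¹ ^ 2 * (∫ ω, |u ω| ∂μ) * μ.real A := by ring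

end Coordinates

theorem additive_bias_bound_general
    {Ω : Type*} [MeasurableSpace Ω] (μ : Measure Ω) [IsProbabilityMeasure μ]
    (p M : ℕ)
    (X : Ω → Fin p → Bool) (hX : Measurable X)
    (G : Fin M → Finset (Fin p))
    (hcover : Finset.univ.biUnion G = (Finset.univ : Finset (Fin p)))
    (honehot : ∀ᵐ ω ∂μ, ∀ m : Fin M, 1 < (G m).card →
        ((G m).filter (fun j => X ω j = true)).card = 1)
    (f : (Fin p → Bool) → ℝ)
    (hf0 : ∫ ω, f (X ω) ∂μ = 0)
    (δ₀ : ℝ) (hδ₀_nonneg : 0 ≤ δ₀)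
    (hδ₀ : ∀ m : Fin M, ∀ i ∈ G m, ∀ᵐ ω ∂μ,
        |condProbOne μ X G m i ω - (μ {ω | X ω i = true}).toReal| ≤ δ₀)
    (pmin : ℝ) (hpmin_pos : 0 < pmin)
    (hpmin : ∀ l k : Fin M, l ≠ k → ∀ i ∈ G l, ∀ j ∈ G k, ∀ a b : Bool,
        pmin ≤ (μ {ω | X ω i = a ∧ X ω j = b}).toReal)
    (m : Fin M) (R : (Fin p → Bool) → ℝ)
    (hRmeas : ∀ x x' : Fin p → Bool, (∀ j ∈ gsetCompl G {m}, x j = x' j) → R x = R x')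
    (hR0 : ∫ ω, R (X ω) ∂μ = 0)
    (hR1 : ∫ ω, |R (X ω)| ∂μ ≤ 2 * Real.sqrt (∫ ω, (f (X ω)) ^ 2 ∂μ)) :
    |(∫ ω, ((μ[fun ω' => f (X ω') - R (X ω') | coordSigma X (gset G {m})]) ω) ^ 2 ∂μ) -
        variance (gEff μ X G f {m}) μ| ≤
      21 * δ₀ * pmin⁻¹ ^ 2 * ∫ ω, (f (X ω)) ^ 2 ∂μ := by
  have hgset : gset G {m} = G m := Finset.singleton_biUnion
  have hgsetCompl : gsetCompl G {m} = (G m)ᶜ := congrArg _ hgset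
  have hδ₀m := hδ₀ m
  simp only [gEff, condProbOne, hgset, hgsetCompl] at hδ₀m hRmeas ⊢
  have hpmin' : ∀ i ∈ G m, ∀ j ∉ G m, ∀ a b : Bool,
      pmin ≤ (μ {ω | X ω i = a ∧ X ω j = b}).toReal := fun i hi j hj => by
    obtain ⟨k, -, hjk⟩ := Finset.mem_biUnion.1 (hcover ▸ Finset.mem_univ j)
    exact hpmin m k (by rintro rfl; exact hj hjk) i hi j hjk
  have hF := memLp_comp_of_finite (μ := μ) hX f 2
  have hR := memLp_comp_of_finite (μ := μ) hX R 2
  have hu_int : Integrable (fun ω => μ[fun ω => f (X ω) | coordSigma X (G m)ᶜ] ω - R (X ω)) μ :=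
    integrable_condExp.sub (hR.integrable one_le_two)
  have hu0 : ∫ ω, μ[fun ω => f (X ω) | coordSigma X (G m)ᶜ] ω - R (X ω) ∂μ = 0 := by
    rw [integral_sub integrable_condExp (hR.integrable one_le_two),
      integral_condExp (coordSigma_le hX _), hf0, hR0, sub_zero]
  have hu : StronglyMeasurable[coordSigma X (G m)ᶜ]
      fun ω => μ[fun ω => f (X ω) | coordSigma X (G m)ᶜ] ω - R (X ω) :=
    stronglyMeasurable_condExp.sub (measurable_coordSigma_comp hRmeas).stronglyMeasurable
  calc _ ≤ 15 * (δ₀ * pmin⁻¹ ^ 2) * ∫ ω, f (X ω) ^ 2 ∂μ :=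
        abs_integral_sq_condExp_sub_variance_le (coordSigma_le hX _) (coordSigma_le hX _) hF hR hR1
          (by positivity) (ae_abs_condExp_comap_le (measurable_coordRestrict hX _) hu_int
            fun v hv => abs_setIntegral_preimage_coordRestrict_le hX (honehot.mono fun ω h => h m)
              hδ₀_nonneg hδ₀m hpmin_pos hpmin' hu hu_int hu0 v hv)
    _ ≤ 21 * δ₀ * pmin⁻¹ ^ 2 * ∫ ω, f (X ω) ^ 2 ∂μ := by
        rw [← mul_assoc]
        gcongr
        norm_num

/-- Bias bound for additive-effect estimation (claim (B.13), generalized form): if `R(X)` is a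
function of `X_{-𝒳(m)}` with `E R(X) = 0` and `E|R(X)| ≤ 2√(E[f(X)²])`, then
`| E[(E(f(X)-R(X) | X_{𝒳(m)}))²] - Var(g_m(X)) | ≤ 21 δ₀ p_min⁻² E[f(X)²]`. -/
theorem additive_bias_bound
    {Ω : Type*} [MeasurableSpace Ω] (μ : Measure Ω) [IsProbabilityMeasure μ]
    (p M : ℕ) (hM : 2 ≤ M)
    (X : Ω → Fin p → Bool) (hX : Measurable X)
    (G : Fin M → Finset (Fin p))
    (hdisj : ∀ l k : Fin M, l ≠ k → Disjoint (G l) (G k))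
    (hcover : Finset.univ.biUnion G = (Finset.univ : Finset (Fin p)))
    (honehot : ∀ᵐ ω ∂μ, ∀ m : Fin M, 1 < (G m).card →
        ((G m).filter (fun j => X ω j = true)).card = 1)
    (f : (Fin p → Bool) → ℝ)
    (hf0 : ∫ ω, f (X ω) ∂μ = 0)
    (hf2 : Integrable (fun ω => (f (X ω)) ^ 2) μ)
    (δ₀ : ℝ) (hδ₀_nonneg : 0 ≤ δ₀)
    (hδ₀ : ∀ m : Fin M, ∀ i ∈ G m, ∀ᵐ ω ∂μ,
        |condProbOne μ X G m i ω - (μ {ω | X ω i = true}).toReal| ≤ δ₀)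
    (pmin : ℝ) (hpmin_pos : 0 < pmin)
    (hpmin : ∀ l k : Fin M, l ≠ k → ∀ i ∈ G l, ∀ j ∈ G k, ∀ a b : Bool,
        pmin ≤ (μ {ω | X ω i = a ∧ X ω j = b}).toReal)
    (m : Fin M) (R : (Fin p → Bool) → ℝ)
    (hRmeas : ∀ x x' : Fin p → Bool, (∀ j ∈ gsetCompl G {m}, x j = x' j) → R x = R x')
    (hR0 : ∫ ω, R (X ω) ∂μ = 0)
    (hR1 : ∫ ω, |R (X ω)| ∂μ ≤ 2 * Real.sqrt (∫ ω, (f (X ω)) ^ 2 ∂μ)) :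
    |(∫ ω, ((μ[fun ω' => f (X ω') - R (X ω') | coordSigma X (gset G {m})]) ω) ^ 2 ∂μ) -
        variance (gEff μ X G f {m}) μ| ≤
      21 * δ₀ * pmin⁻¹ ^ 2 * ∫ ω, (f (X ω)) ^ 2 ∂μ :=
  additive_bias_bound_general μ p M X hX G hcover honehot f hf0 δ₀ hδ₀_nonneg hδ₀ pmin hpmin_pos
    hpmin m R hRmeas hR0 hR1

end CT12
end
end

section
/- Pairwise probability deviation bound (claim (C.36) in the proof of Lemma C.6). For every pair {l, k} ⊂ {1,…,M}, every c_l ∈ {0,1}^{#𝒳(l)}, and every c_k ∈ {0,1}^{#𝒳(k)}, it holds that | P( X_{𝒳(k)} = c_k, X_{𝒳(l)} = c_l ) − P( X_{𝒳(l)} = c_l ) · P( X_{𝒳(k)} = c_k ) | ≤ δ₀ · P( X_{𝒳(k)} = c_k ). -/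
open MeasureTheory ProbabilityTheory

noncomputable section

namespace CT13

/-- The sub-σ-algebra of `Ω` generated by the coordinates of `X` lying in `S`. -/
def coordSigma {Ω : Type*} [MeasurableSpace Ω] {p : ℕ} (X : Ω → Fin p → Bool)
    (S : Finset (Fin p)) : MeasurableSpace Ω :=
  MeasurableSpace.comap (fun ω => fun i : {x // x ∈ S} => X ω i.1) inferInstance

/-- `𝒳(J)`, the union of the feature groups indexed by `J`. -/
def gset {p M : ℕ} (G : Fin M → Finset (Fin p)) (J : Finset (Fin M)) : Finset (Fin p) :=
  J.biUnion G

/-- `{1,…,p} \ 𝒳(J)` as a finset. -/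
def gsetCompl {p M : ℕ} (G : Fin M → Finset (Fin p)) (J : Finset (Fin M)) :
    Finset (Fin p) :=
  (J.biUnion G)ᶜ

/-- The conditional probability `P(X_i = 1 | X_{-𝒳(m)})` as a random variable. -/
def condProbOne {Ω : Type*} [MeasurableSpace Ω] {p M : ℕ} (μ : Measure Ω)
    (X : Ω → Fin p → Bool) (G : Fin M → Finset (Fin p)) (m : Fin M) (i : Fin p) : Ω → ℝ :=
  μ[(fun ω => if X ω i then (1 : ℝ) else 0) | coordSigma X (gsetCompl G {m})]

/-- The event `{X_S = c}`. -/
def condEvent {Ω : Type*} [MeasurableSpace Ω] {p : ℕ} (X : Ω → Fin p → Bool)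
    (S : Finset (Fin p)) (c : {x // x ∈ S} → Bool) : Set Ω :=
  {ω | ∀ i : {x // x ∈ S}, X ω i.1 = c i}

/-! If `A = {X_{𝒳(k)} = c_k}` is measurable with respect to the coordinates outside `𝒳(l)`, then
`P(A ∩ {X_i = 1}) - P(X_i = 1) P(A) = ∫_A (P(X_i = 1 | X_{-𝒳(l)}) - P(X_i = 1)) dP`, which is at
most `δ₀ P(A)` in absolute value for every `i ∈ 𝒳(l)`. This bound is stable under complements
and null modifications, and since `𝒳(l)` is one-hot or has at most one coordinate, the event
`{X_{𝒳(l)} = c_l}` is, up to a null set, `∅`, `Ω`, `{X_i = 1}` or `{X_i = 1}ᶜ`. -/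

section PhiMixing

variable {Ω : Type*} {m mΩ : MeasurableSpace Ω} {μ : Measure Ω} {δ : ℝ} {B B' : Set Ω}

def PhiMixingLE (μ : Measure Ω) (m : MeasurableSpace Ω) (δ : ℝ) (B : Set Ω) : Prop :=
  ∀ A, MeasurableSet[m] A → |μ.real (A ∩ B) - μ.real B * μ.real A| ≤ δ * μ.real A

lemma phiMixingLE_of_condExp [IsFiniteMeasure μ] (hm : m ≤ mΩ) (hB : MeasurableSet B)
    (h : ∀ᵐ ω ∂μ, |μ[B.indicator 1 | m] ω - μ.real B| ≤ δ) : PhiMixingLE μ m δ B := by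
  intro A hA
  have hint : Integrable (B.indicator (1 : Ω → ℝ)) μ := (integrable_const 1).indicator hB
  have hdev : μ.real (A ∩ B) - μ.real B * μ.real A =
      ∫ ω in A, (μ[B.indicator 1 | m] ω - μ.real B) ∂μ := by
    rw [integral_sub integrable_condExp.integrableOn (integrable_const _).integrableOn,
      setIntegral_condExp hm hint hA, integral_indicator_one hB, setIntegral_const,
      measureReal_restrict_apply hB, Set.inter_comm, smul_eq_mul, mul_comm]
  rw [hdev, ← Real.norm_eq_abs]
  exact norm_setIntegral_le_of_norm_le_const_ae (measure_lt_top μ A) (ae_restrict_of_ae h)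

lemma PhiMixingLE.congr_ae (hB : PhiMixingLE μ m δ B) (h : B =ᵐ[μ] B') :
    PhiMixingLE μ m δ B' := by
  intro A hA
  rw [← measureReal_congr h, ← measureReal_congr ((Filter.EventuallyEq.refl _ A).inter h)]
  exact hB A hA

lemma PhiMixingLE.compl [IsProbabilityMeasure μ] (hB : PhiMixingLE μ m δ B)
    (hBm : MeasurableSet B) : PhiMixingLE μ m δ Bᶜ := by
  intro A hA
  have hsplit : μ.real (A ∩ Bᶜ) = μ.real A - μ.real (A ∩ B) := by
    rw [← Set.sdiff_eq, eq_sub_iff_add_eq, measureReal_sdiff_add_inter hBm]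
  rw [hsplit, probReal_compl_eq_one_sub hBm, ← abs_neg]
  convert hB A hA using 2
  ring

lemma phiMixingLE_of_measure_eq_zero (hB : μ B = 0) (hδ : 0 ≤ δ) : PhiMixingLE μ m δ B := by
  intro A _
  have hAB : μ (A ∩ B) = 0 := measure_mono_null Set.inter_subset_right hB
  simpa [Measure.real, hB, hAB] using mul_nonneg hδ measureReal_nonneg

end PhiMixing

lemma exists_eq_decide_of_card_filter_eq_one {α : Type*} [DecidableEq α] {S : Finset α}
    {x : α → Bool} (h : (S.filter (x · = true)).card = 1) :
    ∃ i : S, (fun j : S => x j) = fun j => decide (j = i) := by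
  obtain ⟨a, ha⟩ := Finset.card_eq_one.mp h
  have hx : ∀ j ∈ S, x j = true ↔ j = a := fun j hj => by
    simpa [hj] using Finset.ext_iff.mp ha j
  have haS : a ∈ S := (Finset.mem_filter.mp (ha ▸ Finset.mem_singleton_self a)).1
  refine ⟨⟨a, haS⟩, funext fun j => ?_⟩
  rw [Bool.eq_iff_iff, hx j j.2, decide_eq_true_iff, Subtype.ext_iff]

section Coordinates

variable {Ω : Type*} {m mΩ : MeasurableSpace Ω} {p : ℕ} {X : Ω → Fin p → Bool}

lemma coordSigma_le (hX : Measurable X) (S : Finset (Fin p)) : coordSigma X S ≤ mΩ :=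
  Measurable.comap_le (measurable_pi_iff.mpr fun j => (measurable_pi_apply j.1).comp hX)

lemma measurableSet_coordSigma_condEvent (X : Ω → Fin p → Bool) {T S : Finset (Fin p)}
    (hTS : T ⊆ S) (c : {x // x ∈ T} → Bool) :
    MeasurableSet[coordSigma X S] (condEvent X T c) :=
  MeasurableSpace.measurableSet_comap.mpr
    ⟨{y | ∀ j : {x // x ∈ T}, y ⟨j.1, hTS j.2⟩ = c j}, (Set.to_countable _).measurableSet, rfl⟩

lemma measurableSet_eq_true (hX : Measurable X) (i : Fin p) :
    MeasurableSet {ω | X ω i = true} :=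
  (measurable_pi_apply i).comp hX (measurableSet_singleton true)

lemma mem_condEvent {S : Finset (Fin p)} {c : {x // x ∈ S} → Bool} {ω : Ω} :
    ω ∈ condEvent X S c ↔ (fun j : {x // x ∈ S} => X ω j) = c :=
  funext_iff.symm

lemma condProbOne_eq_condExp_indicator (μ : Measure Ω) {M : ℕ} (G : Fin M → Finset (Fin p))
    (m : Fin M) (i : Fin p) :
    condProbOne μ X G m i = μ[{ω | X ω i = true}.indicator 1 | coordSigma X (gsetCompl G {m})] := by
  unfold condProbOne
  congr 1
  funext ω
  by_cases h : X ω i <;> simp [h]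

lemma subset_gsetCompl_singleton {M : ℕ} {G : Fin M → Finset (Fin p)} {l k : Fin M}
    (h : Disjoint (G l) (G k)) : G k ⊆ gsetCompl G {l} := by
  rw [gsetCompl, Finset.singleton_biUnion]
  exact Finset.subset_compl_iff_disjoint_left.mpr h

variable {μ : Measure Ω} {δ : ℝ} {S : Finset (Fin p)}

lemma phiMixingLE_condEvent_of_card_le_one [IsProbabilityMeasure μ] (hX : Measurable X)
    (hδ : 0 ≤ δ) (hcoord : ∀ i ∈ S, PhiMixingLE μ m δ {ω | X ω i = true}) (hS : S.card ≤ 1)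
    (c : {x // x ∈ S} → Bool) : PhiMixingLE μ m δ (condEvent X S c) := by
  rcases S.eq_empty_or_nonempty with hempty | hne
  · have huniv : condEvent X S c = (∅ : Set Ω)ᶜ :=
      Set.compl_empty ▸ Set.eq_univ_of_forall fun ω j => absurd j.2 (by simp [hempty])
    rw [huniv]
    exact (phiMixingLE_of_measure_eq_zero measure_empty hδ).compl MeasurableSet.empty
  · obtain ⟨i, rfl⟩ := Finset.card_eq_one.mp (le_antisymm hS hne.card_pos)
    have hi : condEvent X {i} c = {ω | X ω i = c ⟨i, Finset.mem_singleton_self i⟩} := by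
      ext ω
      exact ⟨fun h => h ⟨i, Finset.mem_singleton_self i⟩, fun h ⟨j, hj⟩ => by
        obtain rfl := Finset.mem_singleton.mp hj; exact h⟩
    cases hci : c ⟨i, Finset.mem_singleton_self i⟩
    · have hcompl : condEvent X {i} c = {ω | X ω i = true}ᶜ := by
        rw [hi, hci]; ext ω; simp
      rw [hcompl]
      exact (hcoord i (Finset.mem_singleton_self i)).compl (measurableSet_eq_true hX i)
    · rw [hi, hci]
      exact hcoord i (Finset.mem_singleton_self i)

lemma phiMixingLE_condEvent_of_oneHot (hδ : 0 ≤ δ)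
    (hcoord : ∀ i ∈ S, PhiMixingLE μ m δ {ω | X ω i = true})
    (honehot : ∀ᵐ ω ∂μ, (S.filter (X ω · = true)).card = 1) (c : {x // x ∈ S} → Bool) :
    PhiMixingLE μ m δ (condEvent X S c) := by
  by_cases hc : ∃ i : S, c = fun j => decide (j = i)
  · obtain ⟨i, rfl⟩ := hc
    refine (hcoord i i.2).congr_ae ?_
    filter_upwards [honehot] with ω hω
    obtain ⟨h, hh⟩ := exists_eq_decide_of_card_filter_eq_one hω
    have hXi : X ω i = decide (i = h) := congrFun hh i
    refine propext ?_
    change X ω i = true ↔ ω ∈ condEvent X S _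
    rw [mem_condEvent, hh, hXi, decide_eq_true_iff]
    constructor
    · rintro rfl; rfl
    · intro hfun; exact (by simpa using congrFun hfun h : h = i).symm
  · refine phiMixingLE_of_measure_eq_zero (measure_eq_zero_iff_ae_notMem.mpr ?_) hδ
    filter_upwards [honehot] with ω hω hB
    obtain ⟨h, hh⟩ := exists_eq_decide_of_card_filter_eq_one hω
    exact hc ⟨h, (mem_condEvent.mp hB).symm.trans hh⟩

end Coordinates

theorem pairwise_prob_deviation_general
    {Ω : Type*} [MeasurableSpace Ω] (μ : Measure Ω) [IsProbabilityMeasure μ]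
    (p M : ℕ)
    (X : Ω → Fin p → Bool) (hX : Measurable X)
    (G : Fin M → Finset (Fin p))
    (hdisj : ∀ l k : Fin M, l ≠ k → Disjoint (G l) (G k))
    (honehot : ∀ᵐ ω ∂μ, ∀ m : Fin M, 1 < (G m).card →
        ((G m).filter (fun j => X ω j = true)).card = 1)
    (δ₀ : ℝ) (hδ₀_nonneg : 0 ≤ δ₀)
    (hδ₀ : ∀ m : Fin M, ∀ i ∈ G m, ∀ᵐ ω ∂μ,
        |condProbOne μ X G m i ω - (μ {ω | X ω i = true}).toReal| ≤ δ₀)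
    (l k : Fin M) (hlk : l ≠ k)
    (cl : {x // x ∈ G l} → Bool) (ck : {x // x ∈ G k} → Bool) :
    |(μ (condEvent X (G k) ck ∩ condEvent X (G l) cl)).toReal -
        (μ (condEvent X (G l) cl)).toReal * (μ (condEvent X (G k) ck)).toReal| ≤
      δ₀ * (μ (condEvent X (G k) ck)).toReal := by
  have hcoord : ∀ i ∈ G l,
      PhiMixingLE μ (coordSigma X (gsetCompl G {l})) δ₀ {ω | X ω i = true} := fun i hi =>
    phiMixingLE_of_condExp (coordSigma_le hX _) (measurableSet_eq_true hX i)
      (by simpa only [condProbOne_eq_condExp_indicator, ← measureReal_def] using hδ₀ l i hi)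
  have hB : PhiMixingLE μ (coordSigma X (gsetCompl G {l})) δ₀ (condEvent X (G l) cl) := by
    by_cases hcard : (G l).card ≤ 1
    · exact phiMixingLE_condEvent_of_card_le_one hX hδ₀_nonneg hcoord hcard cl
    · exact phiMixingLE_condEvent_of_oneHot hδ₀_nonneg hcoord
        (honehot.mono fun ω hω => hω l (not_le.mp hcard)) cl
  exact hB _ (measurableSet_coordSigma_condEvent X
    (subset_gsetCompl_singleton (hdisj l k hlk)) ck)

/-- Pairwise probability deviation bound (claim (C.36)): for groups `l ≠ k` and all patterns,
`|P(X_{𝒳(k)} = c_k, X_{𝒳(l)} = c_l) - P(X_{𝒳(l)} = c_l) P(X_{𝒳(k)} = c_k)|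
  ≤ δ₀ P(X_{𝒳(k)} = c_k)`. -/
theorem pairwise_prob_deviation
    {Ω : Type*} [MeasurableSpace Ω] (μ : Measure Ω) [IsProbabilityMeasure μ]
    (p M : ℕ) (hM : 2 ≤ M)
    (X : Ω → Fin p → Bool) (hX : Measurable X)
    (G : Fin M → Finset (Fin p))
    (hdisj : ∀ l k : Fin M, l ≠ k → Disjoint (G l) (G k))
    (hcover : Finset.univ.biUnion G = (Finset.univ : Finset (Fin p)))
    (honehot : ∀ᵐ ω ∂μ, ∀ m : Fin M, 1 < (G m).card →
        ((G m).filter (fun j => X ω j = true)).card = 1)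
    (δ₀ : ℝ) (hδ₀_nonneg : 0 ≤ δ₀)
    (hδ₀ : ∀ m : Fin M, ∀ i ∈ G m, ∀ᵐ ω ∂μ,
        |condProbOne μ X G m i ω - (μ {ω | X ω i = true}).toReal| ≤ δ₀)
    (l k : Fin M) (hlk : l ≠ k)
    (cl : {x // x ∈ G l} → Bool) (ck : {x // x ∈ G k} → Bool) :
    |(μ (condEvent X (G k) ck ∩ condEvent X (G l) cl)).toReal -
        (μ (condEvent X (G l) cl)).toReal * (μ (condEvent X (G k) ck)).toReal| ≤
      δ₀ * (μ (condEvent X (G k) ck)).toReal :=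
  pairwise_prob_deviation_general μ p M X hX G hdisj honehot δ₀ hδ₀_nonneg hδ₀ l k hlk cl ck

end CT13
end
end
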